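/- arXiv:1409.1288 — 7 statements merged into one kernel-verified Lean document; each statement's English description precedes it below -/
import Mathlib

section
/- Let F : ℝ → ℝ be Lipschitz continuous, k₁, k₂ ≥ 0, c₁, c₂ ∈ L¹_loc([0,∞)), T₀ ≥ 0, T₁ ∈ (T₀, ∞], with c₁ ≤ c₂ a.e. on [T₀, T₁]. Let kᵢ solve kᵢ' = F(kᵢ) − cᵢ with kᵢ(0) = kᵢ. If k₁(T₀) = k₂(T₀) then k₁(t) ≥ k₂(t) for all t ∈ [T₀, T₁]; if k₁(T₀) > k₂(T₀) then k₁(t) > k₂(t) for all t ∈ [T₀, T₁]. -/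
/-!
The gap `g = k₁ - k₂` satisfies `g t ≥ g τ - M ∫_τ^t |g|` on `[T₀, T₁]`, because `F` is
`M`-Lipschitz and `c₁ ≤ c₂` there. If `g` became negative, then after its last zero `τ` we would
have `|g| = -g`, and Grönwall's inequality for `-g` on `[τ, t]` forces `-g ≤ 0`. If `g(T₀) > 0`
but `g` vanished at some `t`, then `g ≥ 0` on `[T₀, t]`, and the same inequality read backwards
from `t` gives `g τ ≤ M ∫_τ^t g` for `τ ≤ t`, so Grönwall's inequality run backwards yields
`g(T₀) ≤ 0`.
-/

open MeasureTheory Set Topology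

theorem nonpos_of_le_mul_integral {u : ℝ → ℝ} {K a b : ℝ} (hK : 0 ≤ K)
    (hu : ContinuousOn u (Icc a b)) (h : ∀ t ∈ Icc a b, u t ≤ K * ∫ s in a..t, u s) :
    ∀ t ∈ Icc a b, u t ≤ 0 := by
  have hV : ContinuousOn (fun t => ∫ s in a..t, u s) (Icc a b) := by
    rcases le_or_gt a b with hab | hab
    · simpa [uIcc_of_le hab] using
        intervalIntegral.continuousOn_primitive_interval (μ := volume) (hu.integrableOn_Icc.mono_set
          (uIcc_of_le hab).subset)
    · simp [Icc_eq_empty_of_lt hab]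
  have hV' : ∀ x ∈ Ico a b, HasDerivWithinAt (fun t => ∫ s in a..t, u s) (u x) (Ici x) x := by
    intro x hx
    have hIcc : Icc a b ∈ 𝓝[>] x := Icc_mem_nhdsGT_of_mem hx
    refine intervalIntegral.integral_hasDerivWithinAt_right (t := Ioi x) ?_ ?_ ?_
    · exact (hu.mono (Icc_subset_Icc_right hx.2.le)).intervalIntegrable_of_Icc hx.1
    · exact (hu.stronglyMeasurableAtFilter_nhdsWithin measurableSet_Icc x).filter_mono
        (nhdsWithin_le_of_mem hIcc)
    · exact (hu x (Ico_subset_Icc_self hx)).mono_of_mem_nhdsWithin hIcc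
  have hV0 : ∀ t ∈ Icc a b, ∫ s in a..t, u s ≤ 0 := fun t ht => by
    simpa [gronwallBound_ε0_δ0] using le_gronwallBound_of_liminf_deriv_right_le (δ := 0) (ε := 0)
      hV (fun x hx _ hr => (hV' x hx).liminf_right_slope_le hr) (by simp)
      (fun x hx => by simpa using h x (Ico_subset_Icc_self hx)) t ht
  exact fun t ht => (h t ht).trans (mul_nonpos_of_nonneg_of_nonpos hK (hV0 t ht))

theorem nonpos_of_le_mul_integral_right {u : ℝ → ℝ} {K a b : ℝ} (hK : 0 ≤ K)
    (hu : ContinuousOn u (Icc a b)) (h : ∀ t ∈ Icc a b, u t ≤ K * ∫ s in t..b, u s) :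
    ∀ t ∈ Icc a b, u t ≤ 0 := by
  have hrefl : MapsTo (fun s => a + b - s) (Icc a b) (Icc a b) := fun s hs =>
    ⟨by linarith [hs.2], by linarith [hs.1]⟩
  have key := nonpos_of_le_mul_integral hK (u := fun s => u (a + b - s))
    (hu.comp (by fun_prop) hrefl) fun t ht => by
      simpa [intervalIntegral.integral_comp_sub_left] using h _ (hrefl ht)
  intro t ht
  simpa using key _ (hrefl ht)

theorem nonneg_of_sub_mul_integral_abs_le {g : ℝ → ℝ} {M a b : ℝ} (hM : 0 ≤ M)
    (hg : ContinuousOn g (Icc a b))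
    (hbound : ∀ τ t, a ≤ τ → τ ≤ t → t ≤ b → g τ - M * ∫ s in τ..t, |g s| ≤ g t)
    (ha : 0 ≤ g a) : ∀ t ∈ Icc a b, 0 ≤ g t := by
  intro t₁ ht₁
  by_contra! hneg
  set S := Icc a t₁ ∩ g ⁻¹' Ici 0
  have hS : IsCompact S := isCompact_Icc.of_isClosed_subset
    ((hg.mono (Icc_subset_Icc_right ht₁.2)).preimage_isClosed_of_isClosed isClosed_Icc isClosed_Ici)
    inter_subset_left
  obtain ⟨τ, ⟨⟨haτ, hτt₁⟩, hgτ⟩, hτmax⟩ := hS.exists_isGreatest ⟨a, ⟨left_mem_Icc.2 ht₁.1, ha⟩⟩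
  have hneg_after : ∀ s ∈ Ioc τ t₁, g s < 0 := fun s hs => by
    by_contra! h
    exact (hτmax ⟨⟨haτ.trans hs.1.le, hs.2⟩, h⟩).not_gt hs.1
  refine (nonpos_of_le_mul_integral hM (u := fun s => -g s)
    (hg.mono (Icc_subset_Icc haτ ht₁.2)).neg ?_ t₁ ⟨hτt₁, le_rfl⟩).not_gt (neg_pos.2 hneg)
  intro t ht
  have habs : ∫ s in τ..t, |g s| = ∫ s in τ..t, -g s :=
    intervalIntegral.integral_congr_ae (.of_forall fun s hs => by
      rw [uIoc_of_le ht.1] at hs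
      exact abs_of_neg (hneg_after s ⟨hs.1, hs.2.trans ht.2⟩))
  have := hbound τ t haτ ht.1 (ht.2.trans ht₁.2)
  rw [habs] at this
  linarith [show (0 : ℝ) ≤ g τ from hgτ]

theorem pos_of_sub_mul_integral_abs_le {g : ℝ → ℝ} {M a b : ℝ} (hM : 0 ≤ M)
    (hg : ContinuousOn g (Icc a b))
    (hbound : ∀ τ t, a ≤ τ → τ ≤ t → t ≤ b → g τ - M * ∫ s in τ..t, |g s| ≤ g t)
    (ha : 0 < g a) : ∀ t ∈ Icc a b, 0 < g t := by
  have hnonneg := nonneg_of_sub_mul_integral_abs_le hM hg hbound ha.le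
  intro t₁ ht₁
  by_contra! hzero
  refine (nonpos_of_le_mul_integral_right hM (u := g) (hg.mono (Icc_subset_Icc_right ht₁.2)) ?_
    a ⟨le_rfl, ht₁.1⟩).not_gt ha
  intro t ht
  have habs : ∫ s in t..t₁, |g s| = ∫ s in t..t₁, g s :=
    intervalIntegral.integral_congr fun s hs => by
      rw [uIcc_of_le ht.2] at hs
      exact abs_of_nonneg (hnonneg s ⟨ht.1.trans hs.1, hs.2.trans ht₁.2⟩)
  have := hbound t t₁ ht.1 ht.2 ht₁.2
  rw [habs] at this
  linarith

theorem MeasureTheory.LocallyIntegrableOn.intervalIntegrable_of_Ici {E : Type*}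
    [NormedAddCommGroup E] {f : ℝ → E} {c a b : ℝ} (hf : LocallyIntegrableOn f (Ici c))
    (ha : c ≤ a) (hb : c ≤ b) : IntervalIntegrable f volume a b :=
  (hf.integrableOn_compact_subset (fun _ hx => (le_min ha hb).trans hx.1) isCompact_uIcc)
    |>.intervalIntegrable

theorem sub_eq_integral_of_eq_add_integral {k f : ℝ → ℝ} {k₀ τ t : ℝ}
    (hf : LocallyIntegrableOn f (Ici 0)) (hk : ∀ t ≥ (0 : ℝ), k t = k₀ + ∫ s in (0 : ℝ)..t, f s)
    (hτ : 0 ≤ τ) (ht : 0 ≤ t) : k t - k τ = ∫ s in τ..t, f s := by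
  rw [hk t ht, hk τ hτ, ← intervalIntegral.integral_interval_sub_left
    (hf.intervalIntegrable_of_Ici le_rfl ht) (hf.intervalIntegrable_of_Ici le_rfl hτ)]
  ring

theorem continuous_of_abs_sub_le_mul {F : ℝ → ℝ} {M : ℝ}
    (hLip : ∀ x y, |F x - F y| ≤ M * |x - y|) : Continuous F :=
  (LipschitzWith.of_dist_le' hLip).continuous

theorem sub_mul_integral_abs_le_of_integral_eq {F c₁ c₂ k₁f k₂f : ℝ → ℝ} {M k₁ k₂ τ t : ℝ}
    (hLip : ∀ x y, |F x - F y| ≤ M * |x - y|)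
    (hc₁ : LocallyIntegrableOn c₁ (Ici 0)) (hc₂ : LocallyIntegrableOn c₂ (Ici 0))
    (h1cont : ContinuousOn k₁f (Ici 0))
    (h1sol : ∀ t ≥ (0:ℝ), k₁f t = k₁ + ∫ s in (0:ℝ)..t, (F (k₁f s) - c₁ s))
    (h2cont : ContinuousOn k₂f (Ici 0))
    (h2sol : ∀ t ≥ (0:ℝ), k₂f t = k₂ + ∫ s in (0:ℝ)..t, (F (k₂f s) - c₂ s))
    (hτ : 0 ≤ τ) (hτt : τ ≤ t) (hle : ∀ᵐ s ∂volume.restrict (Icc τ t), c₁ s ≤ c₂ s) :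
    (k₁f τ - k₂f τ) - M * ∫ s in τ..t, |k₁f s - k₂f s| ≤ k₁f t - k₂f t := by
  have hF := continuous_of_abs_sub_le_mul hLip
  have hrhs₁ : LocallyIntegrableOn (fun s => F (k₁f s) - c₁ s) (Ici 0) :=
    ((hF.comp_continuousOn h1cont).locallyIntegrableOn measurableSet_Ici).sub hc₁
  have hrhs₂ : LocallyIntegrableOn (fun s => F (k₂f s) - c₂ s) (Ici 0) :=
    ((hF.comp_continuousOn h2cont).locallyIntegrableOn measurableSet_Ici).sub hc₂
  have hgap : LocallyIntegrableOn (fun s => -(M * |k₁f s - k₂f s|)) (Ici 0) :=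
    (((h1cont.sub h2cont).abs.const_smul M).neg).locallyIntegrableOn measurableSet_Ici
  have hI₁ := hrhs₁.intervalIntegrable_of_Ici hτ (hτ.trans hτt)
  have hI₂ := hrhs₂.intervalIntegrable_of_Ici hτ (hτ.trans hτt)
  have hmono := intervalIntegral.integral_mono_ae_restrict hτt
    (hgap.intervalIntegrable_of_Ici hτ (hτ.trans hτt)) (hI₁.sub hI₂) <| hle.mono fun s hs => by
      have := neg_abs_le (F (k₁f s) - F (k₂f s))
      have := hLip (k₁f s) (k₂f s)
      linarith
  rw [intervalIntegral.integral_sub hI₁ hI₂,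
    ← sub_eq_integral_of_eq_add_integral hrhs₁ h1sol hτ (hτ.trans hτt),
    ← sub_eq_integral_of_eq_add_integral hrhs₂ h2sol hτ (hτ.trans hτt),
    intervalIntegral.integral_neg, intervalIntegral.integral_const_mul] at hmono
  linarith

theorem stmt4_general (F c₁ c₂ k₁f k₂f : ℝ → ℝ) (M k₁ k₂ T₀ : ℝ) (T₁ : EReal)
    (hLip : ∀ x y, |F x - F y| ≤ M * |x - y|)
    (hc₁ : LocallyIntegrableOn c₁ (Set.Ici 0))
    (hc₂ : LocallyIntegrableOn c₂ (Set.Ici 0))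
    (hT₀ : 0 ≤ T₀)
    (hle : ∀ᵐ t ∂(volume.restrict {t : ℝ | T₀ ≤ t ∧ (t : EReal) ≤ T₁}), c₁ t ≤ c₂ t)
    (h1cont : ContinuousOn k₁f (Set.Ici 0))
    (h1sol : ∀ t ≥ (0:ℝ), k₁f t = k₁ + ∫ s in (0:ℝ)..t, (F (k₁f s) - c₁ s))
    (h2cont : ContinuousOn k₂f (Set.Ici 0))
    (h2sol : ∀ t ≥ (0:ℝ), k₂f t = k₂ + ∫ s in (0:ℝ)..t, (F (k₂f s) - c₂ s)) :
    (k₁f T₀ = k₂f T₀ → ∀ t, T₀ ≤ t → (t : EReal) ≤ T₁ → k₂f t ≤ k₁f t) ∧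
    (k₂f T₀ < k₁f T₀ → ∀ t, T₀ ≤ t → (t : EReal) ≤ T₁ → k₂f t < k₁f t) := by
  have hM : 0 ≤ M := by simpa using (abs_nonneg _).trans (hLip 1 0)
  have hcont : ContinuousOn (fun s => k₁f s - k₂f s) (Ici T₀) :=
    (h1cont.sub h2cont).mono fun s hs => hT₀.trans hs
  have hbound {T : ℝ} (hT : (T : EReal) ≤ T₁) (τ t : ℝ) (hτ : T₀ ≤ τ) (hτt : τ ≤ t)
      (htT : t ≤ T) :
      (k₁f τ - k₂f τ) - M * ∫ s in τ..t, |k₁f s - k₂f s| ≤ k₁f t - k₂f t :=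
    sub_mul_integral_abs_le_of_integral_eq hLip hc₁ hc₂ h1cont h1sol h2cont h2sol
      (hT₀.trans hτ) hτt <| ae_restrict_of_ae_restrict_of_subset (fun s hs => by
        exact ⟨hτ.trans hs.1, (EReal.coe_le_coe_iff.2 (hs.2.trans htT)).trans hT⟩) hle
  refine ⟨fun heq t ht htT => ?_, fun hlt t ht htT => ?_⟩
  · exact sub_nonneg.1 <| nonneg_of_sub_mul_integral_abs_le hM (hcont.mono Icc_subset_Ici_self)
      (hbound htT) (by simp [heq]) t ⟨ht, le_rfl⟩
  · exact sub_pos.1 <| pos_of_sub_mul_integral_abs_le hM (hcont.mono Icc_subset_Ici_self)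
      (hbound htT) (sub_pos.2 hlt) t ⟨ht, le_rfl⟩

theorem stmt4 (F c₁ c₂ k₁f k₂f : ℝ → ℝ) (M k₁ k₂ T₀ : ℝ) (T₁ : EReal)
    (hLip : ∀ x y, |F x - F y| ≤ M * |x - y|)
    (hk₁ : 0 ≤ k₁) (hk₂ : 0 ≤ k₂)
    (hc₁ : LocallyIntegrableOn c₁ (Set.Ici 0))
    (hc₂ : LocallyIntegrableOn c₂ (Set.Ici 0))
    (hT₀ : 0 ≤ T₀) (hT₁ : (T₀ : EReal) < T₁)
    (hle : ∀ᵐ t ∂(volume.restrict {t : ℝ | T₀ ≤ t ∧ (t : EReal) ≤ T₁}), c₁ t ≤ c₂ t)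
    (h1cont : ContinuousOn k₁f (Set.Ici 0)) (h10 : k₁f 0 = k₁)
    (h1sol : ∀ t ≥ (0:ℝ), k₁f t = k₁ + ∫ s in (0:ℝ)..t, (F (k₁f s) - c₁ s))
    (h2cont : ContinuousOn k₂f (Set.Ici 0)) (h20 : k₂f 0 = k₂)
    (h2sol : ∀ t ≥ (0:ℝ), k₂f t = k₂ + ∫ s in (0:ℝ)..t, (F (k₂f s) - c₂ s)) :
    (k₁f T₀ = k₂f T₀ → ∀ t, T₀ ≤ t → (t : EReal) ≤ T₁ → k₂f t ≤ k₁f t) ∧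
    (k₂f T₀ < k₁f T₀ → ∀ t, T₀ ≤ t → (t : EReal) ≤ T₁ → k₂f t < k₁f t) :=
  stmt4_general F c₁ c₂ k₁f k₂f M k₁ k₂ T₀ T₁ hLip hc₁ hc₂ hT₀ hle h1cont h1sol h2cont h2sol
end

section
/- Let F : ℝ → ℝ be strictly increasing and continuous. Let 0 ≤ k₀ < k₁, c ∈ L¹_loc([0,∞)), H > 0 and δ_H > 0 with δ_H · H ≤ k₁ − k₀. Define c_H(t) = c(t) + H for t ∈ [0, δ_H) and c_H(t) = c(t) for t ≥ δ_H. Then k(t; k₁, c_H) > k(t; k₀, c) for all t ≥ 0. -/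
/-!
Suppose the new trajectory `kH` fails to stay above `k`, and let `T > 0` be the first time with
`kH T ≤ k T`. On `(0, T)` we have `k < kH`, hence `F ∘ k < F ∘ kH` since `F` is strictly
increasing, so subtracting the two integral equations at `T` gives
`kH T - k T > (k₁ - k₀) - ∫₀ᵀ H·𝟙[s < δ] ds ≥ (k₁ - k₀) - δ H ≥ 0`, a contradiction.
-/

open MeasureTheory Set

theorem exists_first_le_of_lt {f g : ℝ → ℝ} {a t : ℝ} (hf : ContinuousOn f (Ici a))
    (hg : ContinuousOn g (Ici a)) (ha : g a < f a) (hat : a ≤ t) (ht : f t ≤ g t) :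
    ∃ T, a < T ∧ f T ≤ g T ∧ ∀ s ∈ Ico a T, g s < f s := by
  set S := {x ∈ Ici a | f x ≤ g x}
  have hbdd : BddBelow S := ⟨a, fun x hx => hx.1⟩
  obtain ⟨haT, hT⟩ : sInf S ∈ S :=
    (isClosed_Ici.isClosed_le hf hg).csInf_mem ⟨t, hat, ht⟩ hbdd
  refine ⟨sInf S, lt_of_le_of_ne haT fun h => ?_, hT, fun s hs => ?_⟩
  · rw [← h] at hT
    exact hT.not_gt ha
  · by_contra! h
    exact hs.2.not_ge (csInf_le hbdd ⟨hs.1, h⟩)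

theorem intervalIntegral_indicator_Iio_const_le {δ H T : ℝ} (hH : 0 ≤ H) (hδ : 0 ≤ δ)
    (hT : 0 ≤ T) : ∫ s in (0 : ℝ)..T, (Iio δ).indicator (fun _ => H) s ≤ δ * H := by
  rw [intervalIntegral.integral_of_le hT, setIntegral_indicator measurableSet_Iio,
    setIntegral_const, smul_eq_mul]
  gcongr
  calc volume.real (Ioc 0 T ∩ Iio δ) ≤ volume.real (Ioo 0 δ) :=
        measureReal_mono (fun s hs => ⟨hs.1.1, hs.2⟩) measure_Ioo_lt_top.ne
    _ = δ := by simp [hδ]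

theorem sub_eq_integral_sub_sub_integral_indicator {F c kH k : ℝ → ℝ} {k₀ k₁ H δ T : ℝ}
    (hF : Continuous F) (hc : IntervalIntegrable c volume 0 T)
    (hk : ContinuousOn k (uIcc 0 T)) (hkH : ContinuousOn kH (uIcc 0 T))
    (hkT : k T = k₀ + ∫ s in (0 : ℝ)..T, (F (k s) - c s))
    (hkHT : kH T = k₁ + ∫ s in (0 : ℝ)..T, (F (kH s) - (if s < δ then c s + H else c s))) :
    kH T - k T = (k₁ - k₀) + (∫ s in (0 : ℝ)..T, (F (kH s) - F (k s))) -
      ∫ s in (0 : ℝ)..T, (Iio δ).indicator (fun _ => H) s := by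
  have hFk : IntervalIntegrable (fun s => F (k s)) volume 0 T :=
    (hF.comp_continuousOn hk).intervalIntegrable
  have hFkH : IntervalIntegrable (fun s => F (kH s)) volume 0 T :=
    (hF.comp_continuousOn hkH).intervalIntegrable
  have hbump : IntervalIntegrable ((Iio δ).indicator fun _ => H) volume 0 T :=
    intervalIntegrable_iff.2
      ((integrableOn_const measure_Ioc_lt_top.ne).indicator measurableSet_Iio)
  have hsplit : (fun s => F (kH s) - (if s < δ then c s + H else c s)) =
      fun s => (F (kH s) - F (k s)) + (F (k s) - c s) - (Iio δ).indicator (fun _ => H) s := by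
    ext s
    simp only [indicator, mem_Iio]
    split_ifs <;> ring
  rw [hkHT, hkT, hsplit, intervalIntegral.integral_sub _ hbump,
    intervalIntegral.integral_add (hFkH.sub hFk) (hFk.sub hc)]
  · ring
  · exact (hFkH.sub hFk).add (hFk.sub hc)

theorem stmt5_general (F c kH k : ℝ → ℝ) (k₀ k₁ H δ : ℝ)
    (hFmono : StrictMono F) (hFcont : Continuous F)
    (h01 : k₀ < k₁)
    (hc : LocallyIntegrableOn c (Set.Ici 0))
    (hH : 0 < H) (hδ : 0 < δ) (hδH : δ * H ≤ k₁ - k₀)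
    (hkcont : ContinuousOn k (Set.Ici 0))
    (hsol : ∀ t ≥ (0:ℝ), k t = k₀ + ∫ s in (0:ℝ)..t, (F (k s) - c s))
    (hkHcont : ContinuousOn kH (Set.Ici 0))
    (hsolH : ∀ t ≥ (0:ℝ), kH t = k₁ + ∫ s in (0:ℝ)..t,
        (F (kH s) - (if s < δ then c s + H else c s))) :
    ∀ t ≥ (0:ℝ), k t < kH t := by
  intro t ht
  by_contra! hle
  have hk0 : k 0 = k₀ := by simpa using hsol 0 le_rfl
  have hkH0 : kH 0 = k₁ := by simpa using hsolH 0 le_rfl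
  obtain ⟨T, hT, hkT, hlt⟩ :=
    exists_first_le_of_lt hkHcont hkcont (by rwa [hk0, hkH0]) ht hle
  have hsub : uIcc 0 T ⊆ Ici (0 : ℝ) := by
    rw [uIcc_of_le hT.le]
    exact Icc_subset_Ici_self
  have hgap := sub_eq_integral_sub_sub_integral_indicator hFcont
    (hc.integrableOn_compact_subset hsub isCompact_uIcc).intervalIntegrable
    (hkcont.mono hsub) (hkHcont.mono hsub) (hsol T hT.le) (hsolH T hT.le)
  have hpos : 0 < ∫ s in (0 : ℝ)..T, (F (kH s) - F (k s)) :=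
    intervalIntegral.intervalIntegral_pos_of_pos_on
      ((hFcont.comp_continuousOn (hkHcont.mono hsub)).intervalIntegrable.sub
        (hFcont.comp_continuousOn (hkcont.mono hsub)).intervalIntegrable)
      (fun s hs => sub_pos.2 (hFmono (hlt s ⟨hs.1.le, hs.2⟩))) hT
  have hbump := intervalIntegral_indicator_Iio_const_le (T := T) hH.le hδ.le hT.le
  linarith

theorem stmt5 (F c kH k : ℝ → ℝ) (k₀ k₁ H δ : ℝ)
    (hFmono : StrictMono F) (hFcont : Continuous F)
    (hk₀ : 0 ≤ k₀) (h01 : k₀ < k₁)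
    (hc : LocallyIntegrableOn c (Set.Ici 0))
    (hH : 0 < H) (hδ : 0 < δ) (hδH : δ * H ≤ k₁ - k₀)
    (hkcont : ContinuousOn k (Set.Ici 0))
    (hsol : ∀ t ≥ (0:ℝ), k t = k₀ + ∫ s in (0:ℝ)..t, (F (k s) - c s))
    (hkHcont : ContinuousOn kH (Set.Ici 0))
    (hsolH : ∀ t ≥ (0:ℝ), kH t = k₁ + ∫ s in (0:ℝ)..t,
        (F (kH s) - (if s < δ then c s + H else c s))) :
    ∀ t ≥ (0:ℝ), k t < kH t :=
  stmt5_general F c kH k k₀ k₁ H δ hFmono hFcont h01 hc hH hδ hδH hkcont hsol hkHcont hsolH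
end

section
/- Under the standing assumptions on F, for every 0 ≤ k₀ < k₁, the set of admissible controls Λ(k₀) is strictly contained in Λ(k₁), where Λ(k) := {c ∈ L¹_loc([0,∞)) : c ≥ 0 a.e. and k(t;k,c) ≥ 0 for all t ≥ 0}. -/
open MeasureTheory

noncomputable section

/-- `k` is the trajectory starting at `k₀` driven by control `c` and production `F`. -/
def SolOn (F : ℝ → ℝ) (k₀ : ℝ) (c k : ℝ → ℝ) : Prop :=
  ContinuousOn k (Set.Ici 0) ∧ k 0 = k₀ ∧
    ∀ t ≥ (0:ℝ), k t = k₀ + ∫ s in (0:ℝ)..t, (F (k s) - c s)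

/-- `c` is an admissible control at initial capital `k₀`. -/
def Adm (F : ℝ → ℝ) (k₀ : ℝ) (c : ℝ → ℝ) : Prop :=
  LocallyIntegrableOn c (Set.Ici 0) ∧
  (∀ᵐ t ∂(volume.restrict (Set.Ici 0)), 0 ≤ c t) ∧
  ∃ k, SolOn F k₀ c k ∧ ∀ t ≥ (0:ℝ), 0 ≤ k t

/-- Intertemporal utility functional. -/
def Util (ρ : ℝ) (u c : ℝ → ℝ) : ℝ :=
  ∫ t in Set.Ioi (0:ℝ), Real.exp (-ρ * t) * u (c t)

/-- Value function. -/
def Val (F : ℝ → ℝ) (ρ : ℝ) (u : ℝ → ℝ) (k₀ : ℝ) : ℝ :=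
  sSup {x | ∃ c, Adm F k₀ c ∧ Util ρ u c = x}

/-
If `k` is the trajectory from `k₀` under `c`, the trajectory from `k₁` is `k + v`, where the gap
`v` solves `v' = F (k + v) - F k`, `v 0 = k₁ - k₀`. This equation no longer involves `c`; its
right-hand side lies between `0` and `M v`, so `0 ≤ v ≤ (k₁ - k₀) e^{M t}` and Picard–Lindelöf
provides a global solution. Conversely, under the constant consumption `F k₁` the capital started
at `k₀` can never exceed `k₀` (it strictly decreases whenever it equals `k₀`), hence it falls at
rate at least `F k₁ - F k₀ > 0` and becomes negative in finite time.
-/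

open Set Filter Topology intervalIntegral
open scoped NNReal

section GlobalSolution

variable {E : Type*} [NormedAddCommGroup E] [NormedSpace ℝ E] {f : ℝ → E → E} {K : ℝ≥0}

theorem exists_forall_mem_Icc_hasDerivWithinAt_of_lipschitzWith [CompleteSpace E]
    (hlip : ∀ t ≥ 0, LipschitzWith K (f t)) (hcont : ∀ x, ContinuousOn (f · x) (Ici 0))
    {T L : ℝ} (hT : 0 ≤ T) (hbdd : ∀ t ∈ Icc 0 T, ∀ x, ‖f t x‖ ≤ L) (x₀ : E) :
    ∃ α : ℝ → E, α 0 = x₀ ∧ ∀ t ∈ Icc 0 T, HasDerivWithinAt α (f t (α t)) (Icc 0 T) t :=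
  IsPicardLindelof.exists_eq_forall_mem_Icc_hasDerivWithinAt₀ (t₀ := ⟨0, le_rfl, hT⟩)
    (a := L.toNNReal * T.toNNReal) (L := L.toNNReal)
    { lipschitzOnWith := fun t ht => (hlip t ht.1).lipschitzOnWith
      continuousOn := fun x _ => (hcont x).mono Icc_subset_Ici_self
      norm_le := fun t ht x _ => (hbdd t ht x).trans (Real.le_coe_toNNReal L)
      mul_max_le := by simp [max_eq_left hT, Real.coe_toNNReal T hT] }

theorem eqOn_Icc_of_hasDerivWithinAt_of_lipschitzWith
    (hlip : ∀ t ≥ 0, LipschitzWith K (f t)) {T : ℝ} {α β : ℝ → E}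
    (hα : ∀ t ∈ Icc 0 T, HasDerivWithinAt α (f t (α t)) (Icc 0 T) t)
    (hβ : ∀ t ∈ Icc 0 T, HasDerivWithinAt β (f t (β t)) (Icc 0 T) t) (h0 : α 0 = β 0) :
    EqOn α β (Icc 0 T) :=
  ODE_solution_unique_of_mem_Icc_right (s := fun _ => univ)
    (fun t ht => (hlip t ht.1).lipschitzOnWith)
    (fun t ht => (hα t ht).continuousWithinAt)
    (fun t ht => (hα t (Ico_subset_Icc_self ht)).mono_of_mem_nhdsWithin
      (Icc_mem_nhdsGE_of_mem ht))
    (fun _ _ => mem_univ _)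
    (fun t ht => (hβ t ht).continuousWithinAt)
    (fun t ht => (hβ t (Ico_subset_Icc_self ht)).mono_of_mem_nhdsWithin
      (Icc_mem_nhdsGE_of_mem ht))
    (fun _ _ => mem_univ _) h0

theorem exists_forall_hasDerivWithinAt_Ici_of_lipschitzWith [CompleteSpace E]
    (hlip : ∀ t ≥ 0, LipschitzWith K (f t)) (hcont : ∀ x, ContinuousOn (f · x) (Ici 0))
    (hbdd : ∀ T, ∃ L, ∀ t ∈ Icc 0 T, ∀ x, ‖f t x‖ ≤ L) (x₀ : E) :
    ∃ α : ℝ → E, α 0 = x₀ ∧ ∀ t ≥ 0, HasDerivWithinAt α (f t (α t)) (Ici 0) t := by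
  have hloc (n : ℕ) : ∃ α : ℝ → E, α 0 = x₀ ∧
      ∀ t ∈ Icc (0 : ℝ) n, HasDerivWithinAt α (f t (α t)) (Icc 0 n) t :=
    have ⟨_, hL⟩ := hbdd n
    exists_forall_mem_Icc_hasDerivWithinAt_of_lipschitzWith hlip hcont n.cast_nonneg hL x₀
  choose α hα₀ hα using hloc
  have hagree {m n : ℕ} (hmn : m ≤ n) : EqOn (α m) (α n) (Icc 0 m) := by
    have hmn' : (m : ℝ) ≤ n := Nat.cast_le.2 hmn
    refine eqOn_Icc_of_hasDerivWithinAt_of_lipschitzWith hlip (hα m) (fun t ht => ?_)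
      ((hα₀ m).trans (hα₀ n).symm)
    exact (hα n t ⟨ht.1, ht.2.trans hmn'⟩).mono (Icc_subset_Icc_right hmn')
  refine ⟨fun t => α (⌊t⌋₊ + 1) t, hα₀ _, fun t ht => ?_⟩
  set n := ⌊t⌋₊ + 1
  have htn : t < n := by simpa [n] using Nat.lt_floor_add_one t
  have heq : EqOn (fun s => α (⌊s⌋₊ + 1) s) (α n) (Icc 0 n) := fun s hs => by
    rcases le_total (⌊s⌋₊ + 1) n with h | h
    · exact hagree h ⟨hs.1, by simpa using (Nat.lt_floor_add_one s).le⟩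
    · exact (hagree h hs).symm
  have hnhds : Icc (0 : ℝ) n ∈ 𝓝[Ici 0] t := by
    rw [← Ici_inter_Iic]
    exact inter_mem_nhdsWithin _ (Iic_mem_nhds htn)
  have hmem : t ∈ Icc (0 : ℝ) n := ⟨ht, htn.le⟩
  rw [heq hmem]
  exact ((hα n t hmem).mono_of_mem_nhdsWithin hnhds).congr_of_eventuallyEq
    (eventuallyEq_of_mem hnhds heq) (heq hmem)

end GlobalSolution

section Capital

variable {F : ℝ → ℝ} {K : ℝ≥0}

theorem lipschitzWith_sub_clamp (hLip : LipschitzOnWith K F (Ici 0)) {a : ℝ} (ha : 0 ≤ a)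
    (b : ℝ) : LipschitzWith K fun x => F (a + max 0 (min b x)) - F a :=
  LipschitzWith.of_dist_le_mul fun x y => by
    have hclamp := ((LipschitzWith.id.const_min b).const_max 0).dist_le_mul x y
    have hF := hLip.dist_le_mul _ (mem_Ici.2 (add_nonneg ha (le_max_left 0 (min b x))))
      _ (mem_Ici.2 (add_nonneg ha (le_max_left 0 (min b y))))
    simp only [Real.dist_eq, NNReal.coe_one, one_mul, id] at hclamp hF ⊢
    rw [sub_sub_sub_cancel_right]
    refine hF.trans (mul_le_mul_of_nonneg_left ?_ K.2)
    rwa [add_sub_add_left_eq_sub]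

theorem sub_clamp_mem_Icc (hmono : Monotone F) (hLip : LipschitzOnWith K F (Ici 0)) {a b : ℝ}
    (ha : 0 ≤ a) (hb : 0 ≤ b) (x : ℝ) : F (a + max 0 (min b x)) - F a ∈ Icc 0 (K * b) := by
  have hclamp : max 0 (min b x) ≤ b := max_le hb (min_le_left _ _)
  refine ⟨sub_nonneg.2 (hmono (le_add_of_nonneg_right (le_max_left _ _))), ?_⟩
  calc F (a + max 0 (min b x)) - F a ≤ K * |a + max 0 (min b x) - a| :=
        (le_abs_self _).trans <| by
          simpa [Real.dist_eq] using hLip.dist_le_mul _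
            (mem_Ici.2 (add_nonneg ha (le_max_left _ _))) _ (mem_Ici.2 ha)
    _ ≤ K * b := by
        rw [add_sub_cancel_left, abs_of_nonneg (le_max_left _ _)]
        gcongr

theorem exists_nonneg_gap_solution (hmono : Monotone F) (hLip : LipschitzOnWith K F (Ici 0))
    {k : ℝ → ℝ} (hkc : ContinuousOn k (Ici 0)) (hknn : ∀ t ≥ 0, 0 ≤ k t) {v₀ : ℝ}
    (hv₀ : 0 ≤ v₀) :
    ∃ v : ℝ → ℝ, v 0 = v₀ ∧
      ∀ t ≥ 0, 0 ≤ v t ∧ HasDerivWithinAt v (F (k t + v t) - F (k t)) (Ici 0) t := by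
  -- Clamping the state to `[0, β t]` makes the field globally Lipschitz and bounded on bounded
  -- time intervals; the a priori bounds `v₀ ≤ v ≤ β` then show that the clamp is inactive.
  set β : ℝ → ℝ := fun t => v₀ * Real.exp (K * t)
  set g : ℝ → ℝ → ℝ := fun t x => F (k t + max 0 (min (β t) x)) - F (k t)
  have hβ : ∀ t, HasDerivAt β (K * β t) t := fun t => by
    simpa [β, mul_comm, mul_left_comm] using
      ((hasDerivAt_id t).const_mul (K : ℝ)).exp.const_mul v₀
  have hβc : Continuous β := continuous_iff_continuousAt.2 fun t => (hβ t).continuousAt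
  have hg : ∀ t ≥ 0, ∀ x, g t x ∈ Icc 0 (K * β t) := fun t ht =>
    sub_clamp_mem_Icc hmono hLip (hknn t ht) (by positivity)
  have hcont : ∀ x, ContinuousOn (g · x) (Ici 0) := fun x => by
    have hclamp : Continuous fun t => max 0 (min (β t) x) := by fun_prop
    exact (hLip.continuousOn.comp (hkc.add hclamp.continuousOn)
      fun t ht => add_nonneg (hknn t ht) (le_max_left _ _)).sub (hLip.continuousOn.comp hkc hknn)
  have hbdd : ∀ T, ∃ L, ∀ t ∈ Icc 0 T, ∀ x, ‖g t x‖ ≤ L := fun T =>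
    ⟨K * β T, fun t ht x => by
      rw [Real.norm_of_nonneg (hg t ht.1 x).1]
      exact (hg t ht.1 x).2.trans (by gcongr; simp only [β]; gcongr; exact ht.2)⟩
  obtain ⟨v, hv0, hv⟩ := exists_forall_hasDerivWithinAt_Ici_of_lipschitzWith
    (fun t ht => lipschitzWith_sub_clamp hLip (hknn t ht) (β t)) hcont hbdd v₀
  have hv_right : ∀ t ≥ 0, ∀ x ∈ Ico 0 t, HasDerivWithinAt v (g x (v x)) (Ici x) x :=
    fun t _ x hx => (hv x hx.1).mono (Ici_subset_Ici.2 hx.1)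
  have hvc : ∀ t, ContinuousOn v (Icc 0 t) := fun t s hs =>
    (hv s hs.1).continuousWithinAt.mono Icc_subset_Ici_self
  have hv_ge : ∀ t ≥ 0, v₀ ≤ v t := fun t ht =>
    image_le_of_deriv_right_le_deriv_boundary continuousOn_const
      (fun x _ => hasDerivWithinAt_const x _ v₀) hv0.ge (hvc t) (hv_right t ht)
      (fun x hx => (hg x hx.1 _).1) ⟨ht, le_rfl⟩
  have hv_le : ∀ t ≥ 0, v t ≤ β t := fun t ht =>
    image_le_of_deriv_right_le_deriv_boundary (hvc t) (hv_right t ht) (by simp [β, hv0])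
      hβc.continuousOn (fun x _ => (hβ x).hasDerivWithinAt)
      (fun x hx => (hg x hx.1 _).2) ⟨ht, le_rfl⟩
  refine ⟨v, hv0, fun t ht => ⟨hv₀.trans (hv_ge t ht), ?_⟩⟩
  have hclamp : max 0 (min (β t) (v t)) = v t := by
    rw [min_eq_right (hv_le t ht), max_eq_right (hv₀.trans (hv_ge t ht))]
  simpa only [g, hclamp] using hv t ht

theorem SolOn.hasDerivWithinAt_Ici {k₀ : ℝ} {c k : ℝ → ℝ} (h : SolOn F k₀ c k)
    (hc : ContinuousOn (fun s => F (k s) - c s) (Ici 0)) {t : ℝ} (ht : 0 ≤ t) :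
    HasDerivWithinAt k (F (k t) - c t) (Ici t) t := by
  have hIoi : Ioi t ⊆ Ici 0 := fun s hs => ht.trans (le_of_lt hs)
  have hint := integral_hasDerivWithinAt_right (s := Ici t) (t := Ioi t)
    ((hc.mono Icc_subset_Ici_self).intervalIntegrable_of_Icc ht)
    ((hc.mono hIoi).stronglyMeasurableAtFilter_nhdsWithin measurableSet_Ioi t)
    ((hc t ht).mono hIoi)
  exact (hint.const_add k₀).congr (fun s hs => h.2.2 s (ht.trans hs)) (h.2.2 t ht)

theorem Adm.of_le (hmono : Monotone F) (hLip : LipschitzOnWith K F (Ici 0)) {k₀ k₁ : ℝ}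
    (h : k₀ ≤ k₁) {c : ℝ → ℝ} (hc : Adm F k₀ c) : Adm F k₁ c := by
  obtain ⟨hloc, hc_nonneg, k, ⟨hkc, hk0, hk⟩, hknn⟩ := hc
  obtain ⟨v, hv0, hv⟩ := exists_nonneg_gap_solution hmono hLip hkc hknn (sub_nonneg.2 h)
  have hvc : ContinuousOn v (Ici 0) := fun t ht => (hv t ht).2.continuousWithinAt
  have hFc := hLip.continuousOn
  refine ⟨hloc, hc_nonneg, k + v, ⟨hkc.add hvc, by simp [hk0, hv0], fun t ht => ?_⟩,
    fun t ht => add_nonneg (hknn t ht) (hv t ht).1⟩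
  have hsub : Icc 0 t ⊆ Ici (0 : ℝ) := Icc_subset_Ici_self
  have hFkv : ContinuousOn (fun s => F (k s + v s)) (Ici 0) :=
    hFc.comp (hkc.add hvc) fun s hs => add_nonneg (hknn s hs) (hv s hs).1
  have hFk : ContinuousOn (fun s => F (k s)) (Ici 0) := hFc.comp hkc hknn
  have hgap : ∫ s in 0..t, (F (k s + v s) - F (k s)) = v t - v 0 :=
    integral_eq_sub_of_hasDeriv_right_of_le ht (hvc.mono hsub)
      (fun x hx => (hv x hx.1.le).2.mono (Ioi_subset_Ici hx.1.le))
      (((hFkv.sub hFk).mono hsub).intervalIntegrable_of_Icc ht)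
  have hcint : IntervalIntegrable c volume 0 t :=
    (intervalIntegrable_iff_integrableOn_Icc_of_le ht).2
      (hloc.integrableOn_compact_subset hsub isCompact_Icc)
  have hsplit : ∫ s in 0..t, (F (k s + v s) - c s) =
      (∫ s in 0..t, (F (k s) - c s)) + ∫ s in 0..t, (F (k s + v s) - F (k s)) := by
    rw [← integral_add (f := fun s => F (k s) - c s) (g := fun s => F (k s + v s) - F (k s))
      (((hFk.mono hsub).intervalIntegrable_of_Icc ht).sub hcint)
      (((hFkv.sub hFk).mono hsub).intervalIntegrable_of_Icc ht)]
    exact integral_congr fun s _ => by ring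
  simp only [Pi.add_apply]
  rw [hsplit, hgap, hk t ht, hv0]
  ring

theorem adm_steady_state {k : ℝ} (hk : 0 ≤ k) (hFk : 0 ≤ F k) : Adm F k fun _ => F k :=
  ⟨(locallyIntegrable_const _).locallyIntegrableOn _, ae_of_all _ fun _ => hFk,
    fun _ => k, ⟨continuousOn_const, rfl, fun t _ => by simp⟩, fun _ _ => hk⟩

theorem not_adm_const_of_lt (hmono : StrictMono F) (hFc : ContinuousOn F (Ici 0)) {k₀ k₁ : ℝ}
    (h : k₀ < k₁) : ¬ Adm F k₀ fun _ => F k₁ := by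
  rintro ⟨-, -, k, hsol, hknn⟩
  have hkc : ContinuousOn k (Ici 0) := hsol.1
  have hk_deriv : ∀ t ≥ 0, ∀ x ∈ Ico 0 t, HasDerivWithinAt k (F (k x) - F k₁) (Ici x) x :=
    fun _ _ x hx => hsol.hasDerivWithinAt_Ici ((hFc.comp hkc hknn).sub continuousOn_const) hx.1
  have hk_le : ∀ t ≥ 0, k t ≤ k₀ := fun t ht =>
    image_le_of_deriv_right_lt_deriv_boundary' (hkc.mono Icc_subset_Ici_self) (hk_deriv t ht)
      hsol.2.1.le continuousOn_const (fun x _ => hasDerivWithinAt_const x _ k₀)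
      (fun x _ hx => by simpa [hx] using hmono h) ⟨ht, le_rfl⟩
  set δ := F k₁ - F k₀
  have hδ : 0 < δ := sub_pos.2 (hmono h)
  have hk_lin : ∀ t ≥ 0, k t ≤ k₀ - δ * t := fun t ht =>
    image_le_of_deriv_right_le_deriv_boundary (hkc.mono Icc_subset_Ici_self) (hk_deriv t ht)
      (by simp [hsol.2.1]) (by fun_prop)
      (fun x _ => ((hasDerivAt_id x).const_mul δ).const_sub k₀ |>.hasDerivWithinAt)
      (fun x hx => by simpa [δ] using hmono.monotone (hk_le x hx.1)) ⟨ht, le_rfl⟩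
  have hk₀ : 0 ≤ k₀ := hsol.2.1 ▸ hknn 0 le_rfl
  have ht : 0 ≤ (k₀ + 1) / δ := by positivity
  have := (hknn _ ht).trans (hk_lin _ ht)
  rw [mul_div_cancel₀ _ hδ.ne'] at this
  linarith

end Capital

theorem stmt7_general (F : ℝ → ℝ) (M k₀ k₁ : ℝ)
    (hFmono : StrictMono F) (hF0 : F 0 = 0)
    (hLip : ∀ x ≥ (0:ℝ), ∀ y ≥ (0:ℝ), |F x - F y| ≤ M * |x - y|)
    (hk₀ : 0 ≤ k₀) (h01 : k₀ < k₁) :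
    {c : ℝ → ℝ | Adm F k₀ c} ⊂ {c : ℝ → ℝ | Adm F k₁ c} := by
  have hLip' : LipschitzOnWith M.toNNReal F (Ici 0) :=
    LipschitzOnWith.of_dist_le' fun x hx y hy => by simpa [Real.dist_eq] using hLip x hx y hy
  have hk₁ : 0 ≤ k₁ := hk₀.trans h01.le
  refine ⟨fun c hc => hc.of_le hFmono.monotone hLip' h01.le, fun hsub => ?_⟩
  exact not_adm_const_of_lt hFmono hLip'.continuousOn h01
    (hsub (adm_steady_state hk₁ (hF0 ▸ hFmono.monotone hk₁)))

theorem stmt7 (F : ℝ → ℝ) (M k₀ k₁ : ℝ)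
    (hF : ContDiff ℝ 1 F) (hFmono : StrictMono F) (hF0 : F 0 = 0)
    (hLip : ∀ x ≥ (0:ℝ), ∀ y ≥ (0:ℝ), |F x - F y| ≤ M * |x - y|)
    (hk₀ : 0 ≤ k₀) (h01 : k₀ < k₁) :
    {c : ℝ → ℝ | Adm F k₀ c} ⊂ {c : ℝ → ℝ | Adm F k₁ c} :=
  stmt7_general F M k₀ k₁ hFmono hF0 hLip hk₀ h01
end
end

section
/- Suppose F(x) ≤ (L+ε₀)x + M for all x ≥ 0, where L, ε₀, M > 0. Let k₀ ≥ 0, c ≥ 0 a.e. locally integrable, and k the nonnegative solution of k' = F(k) − c, k(0)=k₀. Set M(k₀) := 1 + max{(L+ε₀)k₀, M}. Then for every t ≥ 0: ∫₀ᵗ c(s) ds ≤ t·M(k₀)·(1 + e^{(L+ε₀)t}) + M(k₀)/(L+ε₀). -/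
/-!
Integrating the sublinear bound along the state equation gives
`k t + ∫₀ᵗ c ≤ w t := k₀ + ∫₀ᵗ ((L + ε₀) k + M)`. Since `k ≤ w`, we get
`w' ≤ (L + ε₀) w + M`, so Grönwall bounds `w t`, and with it `∫₀ᵗ c`, by
`k₀ e^{(L+ε₀)t} + M (e^{(L+ε₀)t} - 1) / (L + ε₀)`; the stated bound then follows from
`2 (eˣ - 1) ≤ x (1 + eˣ)`.

Integrability of `F ∘ k - c` is not assumed, and has to be proved first. It is bounded above
on `(0, t]`, and where it is integrable its integrals `k s - k₀` are bounded below, so the set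
of `s` up to which it is integrable has a largest element `τ`. Past `τ` the integral in the
state equation takes the junk value `0`, so `k = k₀` there and `F ∘ k - c = F k₀ - c` is
integrable.
-/

open MeasureTheory Set Filter

theorem integral_norm_le_of_ae_le {α : Type*} [MeasurableSpace α] {μ : Measure α}
    [IsFiniteMeasure μ] {f : α → ℝ} {B : ℝ} (hf : Integrable f μ) (hB : 0 ≤ B)
    (hfB : ∀ᵐ x ∂μ, f x ≤ B) :
    ∫ x, ‖f x‖ ∂μ ≤ 2 * (μ.real univ * B) - ∫ x, f x ∂μ := by
  have hpos : Integrable (fun x => max (f x) 0) μ := hf.pos_part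
  have hnorm : ∀ x, ‖f x‖ = 2 * max (f x) 0 - f x := fun x => by
    rcases le_total 0 (f x) with h | h
    · rw [Real.norm_of_nonneg h, max_eq_left h]; ring
    · rw [Real.norm_of_nonpos h, max_eq_right h]; ring
  have hposB : ∫ x, max (f x) 0 ∂μ ≤ μ.real univ * B := by
    rw [← smul_eq_mul, ← integral_const]
    exact integral_mono_ae hpos (integrable_const B) (hfB.mono fun x hx => max_le hx hB)
  simp_rw [hnorm]
  rw [integral_sub (hpos.const_mul 2) hf, integral_const_mul]
  linarith

theorem integrableOn_Ioc_of_ae_le_of_le_integral {f : ℝ → ℝ} {a b B C : ℝ} (hab : a < b)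
    (hint : ∀ s ∈ Ico a b, IntegrableOn f (Ioc a s))
    (hfB : ∀ᵐ x ∂volume.restrict (Ioc a b), f x ≤ B)
    (hC : ∀ s ∈ Ico a b, C ≤ ∫ x in Ioc a s, f x) :
    IntegrableOn f (Ioc a b) := by
  obtain ⟨u, -, hu, hlim⟩ := exists_seq_strictMono_tendsto' hab
  have hu' : ∀ n, u n ∈ Ico a b := fun n => Ioo_subset_Ico_self (hu n)
  refine integrableOn_Ioc_of_intervalIntegral_norm_bounded_right
    (I := 2 * ((b - a) * max B 0) - C) (fun n => hint _ (hu' n)) hlim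
    (Eventually.of_forall fun n => ?_)
  have hfB' : ∀ᵐ x ∂volume.restrict (Ioc a (u n)), f x ≤ max B 0 :=
    (ae_restrict_of_ae_restrict_of_subset (Ioc_subset_Ioc_right (hu' n).2.le) hfB).mono
      fun x hx => hx.trans (le_max_left B 0)
  have hnorm := integral_norm_le_of_ae_le (hint _ (hu' n)) (le_max_right B 0) hfB'
  rw [measureReal_restrict_apply_univ, Real.volume_real_Ioc_of_le (hu' n).1] at hnorm
  have hlen : (u n - a) * max B 0 ≤ (b - a) * max B 0 :=
    mul_le_mul_of_nonneg_right (by linarith [(hu' n).2]) (le_max_right B 0)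
  linarith [hC _ (hu' n)]

theorem exists_isGreatest_integrableOn_Ioc {f : ℝ → ℝ} {a b B C : ℝ} (hab : a ≤ b)
    (hfB : ∀ᵐ x ∂volume.restrict (Ioc a b), f x ≤ B)
    (hC : ∀ s ∈ Icc a b, IntegrableOn f (Ioc a s) → C ≤ ∫ x in Ioc a s, f x) :
    ∃ τ, IsGreatest {s | s ∈ Icc a b ∧ IntegrableOn f (Ioc a s)} τ := by
  set S := {s | s ∈ Icc a b ∧ IntegrableOn f (Ioc a s)}
  have haS : a ∈ S := ⟨left_mem_Icc.2 hab, by simp⟩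
  have hbdd : BddAbove S := ⟨b, fun s hs => hs.1.2⟩
  have hτ : sSup S ∈ Icc a b := ⟨le_csSup hbdd haS, csSup_le ⟨a, haS⟩ fun s hs => hs.1.2⟩
  refine ⟨sSup S, ⟨hτ, ?_⟩, fun s hs => le_csSup hbdd hs⟩
  rcases hτ.1.eq_or_lt with h | h
  · simp [← h]
  have hint : ∀ s ∈ Ico a (sSup S), IntegrableOn f (Ioc a s) := fun s hs => by
    obtain ⟨s', hs'S, hss'⟩ := exists_lt_of_lt_csSup ⟨a, haS⟩ hs.2
    exact hs'S.2.mono_set (Ioc_subset_Ioc_right hss'.le)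
  exact integrableOn_Ioc_of_ae_le_of_le_integral h hint
    (ae_restrict_of_ae_restrict_of_subset (Ioc_subset_Ioc_right hτ.2) hfB)
    fun s hs => hC s ⟨hs.1, hs.2.le.trans hτ.2⟩ (hint s hs)

theorem le_gronwallBound_of_le_integral {f : ℝ → ℝ} {δ K ε a b : ℝ}
    (hf : ContinuousOn f (Icc a b)) (hK : 0 ≤ K)
    (hle : ∀ x ∈ Icc a b, f x ≤ δ + ∫ s in a..x, (K * f s + ε)) :
    ∀ x ∈ Icc a b, δ + ∫ s in a..x, (K * f s + ε) ≤ gronwallBound δ K ε (x - a) := by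
  rcases lt_or_ge b a with hba | hab
  · simp [Icc_eq_empty_of_lt hba]
  have hg : ContinuousOn (fun s => K * f s + ε) (Icc a b) :=
    (continuousOn_const.mul hf).add continuousOn_const
  have hcont : ContinuousOn (fun x => δ + ∫ s in a..x, (K * f s + ε)) (Icc a b) := by
    have := intervalIntegral.continuousOn_primitive_interval (μ := volume)
      (by rw [uIcc_of_le hab]; exact hg.integrableOn_Icc)
    rw [uIcc_of_le hab] at this
    exact continuousOn_const.add this
  have hderiv : ∀ x ∈ Ico a b, HasDerivWithinAt (fun x => δ + ∫ s in a..x, (K * f s + ε))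
      (K * f x + ε) (Ici x) x := by
    intro x hx
    have hsub : Ioc x b ⊆ Icc a b := Ioc_subset_Icc_self.trans (Icc_subset_Icc_left hx.1)
    refine (intervalIntegral.integral_hasDerivWithinAt_right
      ((hg.mono (Icc_subset_Icc_right hx.2.le)).intervalIntegrable_of_Icc hx.1) ?_ ?_).const_add δ
    · rw [← nhdsWithin_Ioc_eq_nhdsGT hx.2]
      exact (hg.mono hsub).stronglyMeasurableAtFilter_nhdsWithin measurableSet_Ioc x
    · rw [← continuousWithinAt_Ioc_iff_Ioi hx.2]
      exact (hg x (Ico_subset_Icc_self hx)).mono hsub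
  refine le_gronwallBound_of_liminf_deriv_right_le hcont
    (fun x hx _ hr => (hderiv x hx).liminf_right_slope_le hr) (by simp) fun x hx => ?_
  have := hle x (Ico_subset_Icc_self hx)
  gcongr

theorem two_mul_exp_sub_one_le {x : ℝ} (hx : 0 ≤ x) :
    2 * (Real.exp x - 1) ≤ x * (1 + Real.exp x) := by
  set φ : ℝ → ℝ := fun y => y * (1 + Real.exp y) - 2 * (Real.exp y - 1)
  have hφ : ∀ y, HasDerivAt φ (Real.exp y * (Real.exp (-y) - 1 + y)) y := fun y => by
    refine (((hasDerivAt_id y).mul ((hasDerivAt_const y (1 : ℝ)).add (Real.hasDerivAt_exp y))).sub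
      (((Real.hasDerivAt_exp y).sub_const 1).const_mul 2)).congr_deriv ?_
    rw [Real.exp_neg]
    field_simp
    simp only [id_eq, Pi.add_apply]
    ring
  have hmono : MonotoneOn φ (Ici 0) := by
    refine monotoneOn_of_deriv_nonneg (convex_Ici 0)
      (fun y _ => (hφ y).continuousAt.continuousWithinAt)
      (fun y _ => (hφ y).differentiableAt.differentiableWithinAt) fun y _ => ?_
    rw [(hφ y).deriv]
    have := Real.add_one_le_exp (-y)
    exact mul_nonneg (Real.exp_pos y).le (by linarith)
  have := hmono self_mem_Ici hx hx
  simp only [φ, Real.exp_zero] at this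
  linarith

theorem gronwallBound_le {δ K ε M₀ x : ℝ} (hK : 0 < K) (hx : 0 ≤ x) (hM₀ : 0 ≤ M₀)
    (hδ : K * δ ≤ M₀) (hε : ε ≤ M₀) :
    gronwallBound δ K ε x ≤ x * M₀ * (1 + Real.exp (K * x)) + M₀ / K := by
  have he : 1 ≤ Real.exp (K * x) := Real.one_le_exp (by positivity)
  have hkey := mul_le_mul_of_nonneg_left (two_mul_exp_sub_one_le (mul_nonneg hK.le hx))
    (div_nonneg hM₀ hK.le)
  rw [gronwallBound_of_K_ne_0 hK.ne']
  calc δ * Real.exp (K * x) + ε / K * (Real.exp (K * x) - 1)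
      ≤ M₀ / K * Real.exp (K * x) + M₀ / K * (Real.exp (K * x) - 1) := by
        gcongr
        rwa [le_div_iff₀' hK]
    _ = M₀ / K * (2 * (Real.exp (K * x) - 1)) + M₀ / K := by ring
    _ ≤ x * M₀ * (1 + Real.exp (K * x)) + M₀ / K := by
        have : M₀ / K * (K * x * (1 + Real.exp (K * x))) = x * M₀ * (1 + Real.exp (K * x)) := by
          field_simp
        linarith

section Solution

variable {F c k : ℝ → ℝ} {Λ M k₀ : ℝ}

theorem integrableOn_Ioc_of_solution (hF : ∀ x ≥ (0:ℝ), F x ≤ Λ * x + M)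
    (hc : LocallyIntegrableOn c (Ici 0)) (hcpos : ∀ᵐ s ∂volume.restrict (Ici 0), 0 ≤ c s)
    (hkcont : ContinuousOn k (Ici 0))
    (hsol : ∀ t ≥ (0:ℝ), k t = k₀ + ∫ s in (0:ℝ)..t, (F (k s) - c s))
    (hknn : ∀ t ≥ (0:ℝ), 0 ≤ k t) {t : ℝ} (ht : 0 ≤ t) :
    IntegrableOn (fun s => F (k s) - c s) (Ioc 0 t) := by
  have hcont : ContinuousOn (fun s => Λ * k s + M) (Icc 0 t) :=
    (continuousOn_const.mul (hkcont.mono Icc_subset_Ici_self)).add continuousOn_const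
  obtain ⟨B, hB⟩ := isCompact_Icc.exists_bound_of_continuousOn hcont
  have hgB : ∀ᵐ s ∂volume.restrict (Ioc 0 t), F (k s) - c s ≤ B := by
    filter_upwards [ae_restrict_mem measurableSet_Ioc,
      ae_restrict_of_ae_restrict_of_subset (Ioc_subset_Icc_self.trans Icc_subset_Ici_self) hcpos]
      with s hs hcs
    have := (le_abs_self _).trans (hB s (Ioc_subset_Icc_self hs))
    linarith [hF _ (hknn s hs.1.le)]
  have hint_eq : ∀ s ≥ (0:ℝ), ∫ u in Ioc 0 s, (F (k u) - c u) = k s - k₀ := fun s hs => by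
    rw [hsol s hs, intervalIntegral.integral_of_le hs]; ring
  obtain ⟨τ, ⟨hτ, hτint⟩, hτmax⟩ := exists_isGreatest_integrableOn_Ioc (C := -k₀) ht hgB
    fun s hs _ => by linarith [hint_eq s hs.1, hknn s hs.1]
  have hk_const : ∀ s ∈ Ioc τ t, k s = k₀ := fun s hs => by
    have hs0 : 0 ≤ s := hτ.1.trans hs.1.le
    have hnot : ¬IntegrableOn (fun s => F (k s) - c s) (Ioc 0 s) :=
      fun h => hs.1.not_ge (hτmax ⟨⟨hs0, hs.2⟩, h⟩)
    linarith [hint_eq s hs0, integral_undef hnot]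
  have hτt : IntegrableOn (fun s => F (k s) - c s) (Ioc τ t) := by
    have hcτ : IntegrableOn c (Ioc τ t) :=
      (hc.integrableOn_compact_subset (fun s hs => hτ.1.trans hs.1) isCompact_Icc).mono_set
        Ioc_subset_Icc_self
    refine ((integrableOn_const (C := F k₀) measure_Ioc_lt_top.ne).sub hcτ).congr_fun
      (fun s hs => ?_) measurableSet_Ioc
    simp only [Pi.sub_apply, hk_const s hs]
  rw [← Ioc_union_Ioc_eq_Ioc hτ.1 hτ.2]
  exact hτint.union hτt

theorem solution_add_integral_le (hF : ∀ x ≥ (0:ℝ), F x ≤ Λ * x + M)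
    (hc : LocallyIntegrableOn c (Ici 0)) (hcpos : ∀ᵐ s ∂volume.restrict (Ici 0), 0 ≤ c s)
    (hkcont : ContinuousOn k (Ici 0))
    (hsol : ∀ t ≥ (0:ℝ), k t = k₀ + ∫ s in (0:ℝ)..t, (F (k s) - c s))
    (hknn : ∀ t ≥ (0:ℝ), 0 ≤ k t) {t : ℝ} (ht : 0 ≤ t) :
    k t + ∫ s in (0:ℝ)..t, c s ≤ k₀ + ∫ s in (0:ℝ)..t, (Λ * k s + M) := by
  have hg : IntervalIntegrable (fun s => F (k s) - c s) volume 0 t :=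
    (intervalIntegrable_iff_integrableOn_Ioc_of_le ht).2
      (integrableOn_Ioc_of_solution hF hc hcpos hkcont hsol hknn ht)
  have hci : IntervalIntegrable c volume 0 t :=
    (intervalIntegrable_iff_integrableOn_Icc_of_le ht).2
      (hc.integrableOn_compact_subset Icc_subset_Ici_self isCompact_Icc)
  have hFk : IntervalIntegrable (fun s => F (k s)) volume 0 t := by
    simpa using hg.add hci
  have hk : IntervalIntegrable k volume 0 t :=
    (hkcont.mono Icc_subset_Ici_self).intervalIntegrable_of_Icc ht
  calc k t + ∫ s in (0:ℝ)..t, c s = k₀ + ∫ s in (0:ℝ)..t, F (k s) := by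
        rw [hsol t ht, intervalIntegral.integral_sub hFk hci]; ring
    _ ≤ k₀ + ∫ s in (0:ℝ)..t, (Λ * k s + M) := by
        gcongr
        exact intervalIntegral.integral_mono_on ht hFk
          ((hk.const_mul Λ).add intervalIntegrable_const) fun s hs => hF _ (hknn s hs.1)

end Solution

theorem stmt9_general (F c k : ℝ → ℝ) (L ε₀ M k₀ : ℝ)
    (hL : 0 < L) (hε₀ : 0 < ε₀) (hM : 0 < M)
    (hFsub : ∀ x ≥ (0:ℝ), F x ≤ (L + ε₀) * x + M)
    (hc : LocallyIntegrableOn c (Set.Ici 0))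
    (hcpos : ∀ᵐ t ∂(volume.restrict (Set.Ici 0)), 0 ≤ c t)
    (hkcont : ContinuousOn k (Set.Ici 0))
    (hsol : ∀ t ≥ (0:ℝ), k t = k₀ + ∫ s in (0:ℝ)..t, (F (k s) - c s))
    (hknn : ∀ t ≥ (0:ℝ), 0 ≤ k t) :
    ∀ t ≥ (0:ℝ), (∫ s in (0:ℝ)..t, c s) ≤
      t * (1 + max ((L + ε₀) * k₀) M) * (1 + Real.exp ((L + ε₀) * t)) +
        (1 + max ((L + ε₀) * k₀) M) / (L + ε₀) := by
  intro t ht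
  have hΛ : 0 < L + ε₀ := add_pos hL hε₀
  have hM₀ : M ≤ 1 + max ((L + ε₀) * k₀) M := by linarith [le_max_right ((L + ε₀) * k₀) M]
  have hbound := fun s (hs : 0 ≤ s) =>
    solution_add_integral_le hFsub hc hcpos hkcont hsol hknn hs
  have hc_nonneg : ∀ s ≥ (0:ℝ), 0 ≤ ∫ u in (0:ℝ)..s, c u := fun s hs =>
    intervalIntegral.integral_nonneg_of_ae_restrict hs
      (ae_restrict_of_ae_restrict_of_subset Icc_subset_Ici_self hcpos)
  have hgronwall := le_gronwallBound_of_le_integral (δ := k₀) (ε := M)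
    (hkcont.mono Icc_subset_Ici_self) hΛ.le
    (fun s hs => by linarith [hbound s hs.1, hc_nonneg s hs.1]) t ⟨ht, le_rfl⟩
  rw [sub_zero] at hgronwall
  calc (∫ s in (0:ℝ)..t, c s) ≤ gronwallBound k₀ (L + ε₀) M t := by
        linarith [hbound t ht, hknn t ht]
    _ ≤ _ := gronwallBound_le hΛ ht (hM.le.trans hM₀)
        (by linarith [le_max_left ((L + ε₀) * k₀) M]) hM₀

theorem stmt9 (F c k : ℝ → ℝ) (L ε₀ M k₀ : ℝ)
    (hL : 0 < L) (hε₀ : 0 < ε₀) (hM : 0 < M) (hk₀ : 0 ≤ k₀)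
    (hFsub : ∀ x ≥ (0:ℝ), F x ≤ (L + ε₀) * x + M)
    (hc : LocallyIntegrableOn c (Set.Ici 0))
    (hcpos : ∀ᵐ t ∂(volume.restrict (Set.Ici 0)), 0 ≤ c t)
    (hkcont : ContinuousOn k (Set.Ici 0)) (hk0 : k 0 = k₀)
    (hsol : ∀ t ≥ (0:ℝ), k t = k₀ + ∫ s in (0:ℝ)..t, (F (k s) - c s))
    (hknn : ∀ t ≥ (0:ℝ), 0 ≤ k t) :
    ∀ t ≥ (0:ℝ), (∫ s in (0:ℝ)..t, c s) ≤
      t * (1 + max ((L + ε₀) * k₀) M) * (1 + Real.exp ((L + ε₀) * t)) +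
        (1 + max ((L + ε₀) * k₀) M) / (L + ε₀) :=
  stmt9_general F c k L ε₀ M k₀ hL hε₀ hM hFsub hc hcpos hkcont hsol hknn
end

section
/- Under the standing assumptions on F and u (in particular ∃ε₀>0 with e^{ε₀t}e^{−ρt}u(e^{(L+ε₀)t}) → 0 as t→∞), for every k₀ ≥ 0 and every admissible control c ∈ Λ(k₀): lim_{t→∞} e^{−ρt} ∫₀ᵗ u(c(s)) ds = 0, and the utility functional satisfies U(c;k₀) = ρ ∫₀^∞ e^{−ρt} (∫₀ᵗ u(c(s)) ds) dt ≤ γ(k₀) < ∞ for a finite constant γ(k₀) depending only on k₀ and the data. -/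
open MeasureTheory

noncomputable section

/-!
With `l = L + ε₀`, Grönwall's inequality applied to the capital equation bounds the cumulative
consumption: `∫₀ᵗ c ≤ (k₀ + M̂ / l) e^{lt}`. Concavity of `u` with `u 0 = 0` gives
`u x ≤ u a (1 + x / a)` for `a > 0`; taking `a = e^{lt}` bounds the cumulative utility
`∫₀ᵗ u ∘ c` by `u (e^{lt}) (t + k₀ + M̂ / l)`. By the growth hypothesis on `u`, this bound is
`O(e^{-ε₀ t / 2})` once discounted, which yields both the limit and an integrable majorant
independent of `c`. The identity for `U` is Tonelli's theorem applied to
`e^{-ρs} = ∫ₛ^∞ ρ e^{-ρt} dt`.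
-/

open Real Set Filter Topology Asymptotics
open scoped ENNReal

lemma MeasureTheory.LocallyIntegrableOn.integrableOn_Ioc {f : ℝ → ℝ} {a : ℝ}
    (hf : LocallyIntegrableOn f (Ici a)) (b : ℝ) : IntegrableOn f (Ioc a b) :=
  (hf.integrableOn_compact_subset Icc_subset_Ici_self isCompact_Icc).mono_set Ioc_subset_Icc_self

section Utility

variable {u c : ℝ → ℝ}

lemma ConcaveOn.le_mul_one_add_div (hmono : MonotoneOn u (Ici 0))
    (hconc : ConcaveOn ℝ (Ici 0) u) (hu0 : u 0 = 0) {a x : ℝ} (ha : 0 < a) (hx : 0 ≤ x) :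
    u x ≤ u a * (1 + x / a) := by
  have hua : 0 ≤ u a := hu0 ▸ hmono self_mem_Ici ha.le ha.le
  rcases le_or_gt x a with hxa | hax
  · have : u x ≤ u a := hmono hx ha.le hxa
    nlinarith [div_nonneg hx ha.le]
  · have hslope := hconc.antitoneOn_slope_gt self_mem_Ici ⟨ha.le, ha⟩
      ⟨hx, ha.trans hax⟩ hax.le
    simp only [slope_def_field, hu0, sub_zero] at hslope
    have : u x ≤ u a * (x / a) := by
      rw [div_le_div_iff₀ (ha.trans hax) ha] at hslope
      rw [mul_div_assoc', le_div_iff₀ ha]; linarith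
    nlinarith

lemma ContinuousOn.aestronglyMeasurable_comp_of_nonneg {μ : Measure ℝ}
    (hcont : ContinuousOn u (Ici 0)) (hc : AEStronglyMeasurable c μ) (hc0 : ∀ᵐ x ∂μ, 0 ≤ c x) :
    AEStronglyMeasurable (fun x => u (c x)) μ := by
  have hmax : Continuous fun x => u (max x 0) :=
    hcont.comp_continuous (continuous_id.max continuous_const) fun x => le_max_right x 0
  refine (hmax.comp_aestronglyMeasurable hc).congr ?_
  filter_upwards [hc0] with x hx
  simp [max_eq_left hx]

lemma integrableOn_comp_of_concaveOn (hcont : ContinuousOn u (Ici 0))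
    (hmono : MonotoneOn u (Ici 0)) (hconc : ConcaveOn ℝ (Ici 0) u) (hu0 : u 0 = 0)
    {s : Set ℝ} (hs : volume s ≠ ⊤) (hc : IntegrableOn c s)
    (hc0 : ∀ᵐ x ∂volume.restrict s, 0 ≤ c x) : IntegrableOn (fun x => u (c x)) s := by
  refine Integrable.mono' ((integrableOn_const (C := u 1) hs).add (hc.const_mul (u 1)))
    (hcont.aestronglyMeasurable_comp_of_nonneg hc.aestronglyMeasurable hc0) ?_
  filter_upwards [hc0] with x hx
  have := hconc.le_mul_one_add_div hmono hu0 one_pos hx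
  rw [norm_of_nonneg (hu0 ▸ hmono self_mem_Ici hx hx), Pi.add_apply]
  simp only [div_one] at this
  linarith

lemma integral_comp_le_of_concaveOn (hcont : ContinuousOn u (Ici 0))
    (hmono : MonotoneOn u (Ici 0)) (hconc : ConcaveOn ℝ (Ici 0) u) (hu0 : u 0 = 0) {t a : ℝ}
    (ht : 0 ≤ t) (ha : 0 < a)
    (hc : IntegrableOn c (Icc 0 t)) (hc0 : ∀ᵐ x ∂volume.restrict (Icc 0 t), 0 ≤ c x) :
    ∫ s in (0:ℝ)..t, u (c s) ≤ u a * (t + (∫ s in (0:ℝ)..t, c s) / a) := by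
  have hci : IntervalIntegrable c volume 0 t := (uIcc_of_le ht ▸ hc).intervalIntegrable
  calc ∫ s in (0:ℝ)..t, u (c s)
      ≤ ∫ s in (0:ℝ)..t, u a * (1 + c s / a) := by
        refine intervalIntegral.integral_mono_ae_restrict ht
          (uIcc_of_le ht ▸ integrableOn_comp_of_concaveOn hcont hmono hconc hu0
            (by simp) hc hc0).intervalIntegrable
          ((intervalIntegrable_const.add (hci.div_const a)).const_mul _) ?_
        filter_upwards [hc0] with x hx
        exact hconc.le_mul_one_add_div hmono hu0 ha hx
    _ = u a * (t + (∫ s in (0:ℝ)..t, c s) / a) := by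
        rw [intervalIntegral.integral_const_mul, intervalIntegral.integral_add
          intervalIntegrable_const (hci.div_const a), intervalIntegral.integral_div]
        simp

lemma MeasureTheory.LocallyIntegrableOn.comp_of_concaveOn (hc : LocallyIntegrableOn c (Ici 0))
    (hcont : ContinuousOn u (Ici 0)) (hmono : MonotoneOn u (Ici 0))
    (hconc : ConcaveOn ℝ (Ici 0) u) (hu0 : u 0 = 0)
    (hc0 : ∀ᵐ x ∂volume.restrict (Ici 0), 0 ≤ c x) :
    LocallyIntegrableOn (fun x => u (c x)) (Ici 0) :=
  (locallyIntegrableOn_iff isClosed_Ici.isLocallyClosed).mpr fun _ hK hKc =>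
    integrableOn_comp_of_concaveOn hcont hmono hconc hu0 hKc.measure_lt_top.ne
      (hc.integrableOn_compact_subset hK hKc) (ae_restrict_of_ae_restrict_of_subset hK hc0)

end Utility

lemma Monotone.intervalIntegrable_comp {G k : ℝ → ℝ} {a b : ℝ} (hG : Monotone G)
    (hk : ContinuousOn k (uIcc a b)) : IntervalIntegrable (fun s => G (k s)) volume a b := by
  obtain ⟨C, hC⟩ := isCompact_uIcc.exists_bound_of_continuousOn hk
  refine (intervalIntegrable_const (c := max |G (-C)| |G C|)).mono_fun'
    (hG.measurable.comp_aemeasurable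
      ((hk.mono uIoc_subset_uIcc).aestronglyMeasurable measurableSet_uIoc).aemeasurable
      ).aestronglyMeasurable ?_
  filter_upwards [ae_restrict_mem measurableSet_uIoc] with s hs
  have hks := abs_le.mp (hC s (uIoc_subset_uIcc hs))
  rw [norm_eq_abs, abs_le]
  constructor
  · linarith [neg_abs_le (G (-C)), le_max_left |G (-C)| |G C|, hG hks.1]
  · linarith [le_abs_self (G C), le_max_right |G (-C)| |G C|, hG hks.2]

lemma add_integral_le_gronwallBound {k : ℝ → ℝ} {δ K ε T : ℝ} (hK : 0 ≤ K)
    (hk : ContinuousOn k (Ici 0)) (hle : ∀ t ≥ 0, k t ≤ δ + ∫ s in (0:ℝ)..t, (K * k s + ε))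
    (hT : 0 ≤ T) : δ + ∫ s in (0:ℝ)..T, (K * k s + ε) ≤ gronwallBound δ K ε T := by
  set g : ℝ → ℝ := fun s => K * k s + ε
  have hg : ContinuousOn g (Ici 0) := (continuousOn_const.mul hk).add continuousOn_const
  have hgi : ∀ t ≥ 0, IntervalIntegrable g volume 0 t := fun t ht =>
    (hg.mono (uIcc_of_le ht ▸ Icc_subset_Ici_self)).intervalIntegrable
  have hw : ContinuousOn (fun t => δ + ∫ s in (0:ℝ)..t, g s) (Icc 0 T) :=
    continuousOn_const.add (uIcc_of_le hT ▸ intervalIntegral.continuousOn_primitive_interval'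
      (hgi T hT) left_mem_uIcc)
  have hw' : ∀ x ∈ Ico 0 T,
      HasDerivWithinAt (fun t => δ + ∫ s in (0:ℝ)..t, g s) (g x) (Ici x) x := by
    intro x hx
    have hsub : Ioi x ⊆ Ici 0 := fun y hy => hx.1.trans (le_of_lt hy)
    refine (intervalIntegral.integral_hasDerivWithinAt_right (hgi x hx.1) ?_
      ((hg x hx.1).mono hsub)).const_add δ
    exact (hg.stronglyMeasurableAtFilter_nhdsWithin measurableSet_Ici x).filter_mono
      (nhdsWithin_mono x hsub)
  have := le_gronwallBound_of_liminf_deriv_right_le (δ := δ) (K := K) (ε := ε) hw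
    (fun x hx _ hr => (hw' x hx).liminf_right_slope_le hr) (by simp)
    (fun x hx => by simp only [g]; nlinarith [hle x hx.1]) T ⟨hT, le_rfl⟩
  simpa using this

section Capital

variable {F c k : ℝ → ℝ} {k₀ l M : ℝ}

lemma SolOn.add_integral_le (hsol : SolOn F k₀ c k) (hF : MonotoneOn F (Ici 0))
    (hFle : ∀ x ≥ 0, F x ≤ l * x + M) (hc : ∀ t ≥ 0, IntervalIntegrable c volume 0 t)
    (hk : ∀ t ≥ 0, 0 ≤ k t) {t : ℝ} (ht : 0 ≤ t) :
    k t + ∫ s in (0:ℝ)..t, c s ≤ k₀ + ∫ s in (0:ℝ)..t, (l * k s + M) := by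
  obtain ⟨hkc, -, hkeq⟩ := hsol
  have hkc' : ContinuousOn k (uIcc 0 t) := hkc.mono (uIcc_of_le ht ▸ Icc_subset_Ici_self)
  have hFk : IntervalIntegrable (fun s => F (k s)) volume 0 t := by
    have hFmax : Monotone fun x => F (max x 0) := fun x y hxy =>
      hF (le_max_right x 0) (le_max_right y 0) (max_le_max hxy le_rfl)
    refine (hFmax.intervalIntegrable_comp hkc').congr_ae ?_
    filter_upwards [ae_restrict_mem measurableSet_uIoc] with s hs
    rw [uIoc_of_le ht] at hs
    simp [max_eq_left (hk s hs.1.le)]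
  have hlin : IntervalIntegrable (fun s => l * k s + M) volume 0 t :=
    (continuousOn_const.mul hkc' |>.add continuousOn_const).intervalIntegrable
  have hmono : ∫ s in (0:ℝ)..t, F (k s) ≤ ∫ s in (0:ℝ)..t, (l * k s + M) :=
    intervalIntegral.integral_mono_on ht hFk hlin fun s hs => hFle _ (hk s hs.1)
  rw [hkeq t ht, intervalIntegral.integral_sub hFk (hc t ht)]
  linarith

lemma SolOn.integral_le_exp (hsol : SolOn F k₀ c k) (hl : 0 < l) (hM : 0 ≤ M)
    (hF : MonotoneOn F (Ici 0)) (hFle : ∀ x ≥ 0, F x ≤ l * x + M)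
    (hc : ∀ t ≥ 0, IntervalIntegrable c volume 0 t)
    (hc0 : ∀ᵐ t ∂(volume.restrict (Ici 0)), 0 ≤ c t) (hk : ∀ t ≥ 0, 0 ≤ k t)
    {t : ℝ} (ht : 0 ≤ t) : ∫ s in (0:ℝ)..t, c s ≤ (k₀ + M / l) * exp (l * t) := by
  have hc_int : ∀ t ≥ 0, 0 ≤ ∫ s in (0:ℝ)..t, c s := fun t ht =>
    intervalIntegral.integral_nonneg_of_ae_restrict ht
      (ae_restrict_of_ae_restrict_of_subset Icc_subset_Ici_self hc0)
  have hgron := add_integral_le_gronwallBound (δ := k₀) (ε := M) hl.le hsol.1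
    (fun t ht => by linarith [hsol.add_integral_le hF hFle hc hk ht, hc_int t ht]) ht
  rw [gronwallBound_of_K_ne_0 hl.ne'] at hgron
  calc ∫ s in (0:ℝ)..t, c s ≤ k₀ + ∫ s in (0:ℝ)..t, (l * k s + M) := by
        linarith [hsol.add_integral_le hF hFle hc hk ht, hk t ht]
    _ ≤ k₀ * exp (l * t) + M / l * (exp (l * t) - 1) := hgron
    _ ≤ (k₀ + M / l) * exp (l * t) := by linarith [div_nonneg hM hl.le]

end Capital

section Discounting

variable {ρ : ℝ}

lemma lintegral_Ici_ofReal_mul_exp (hρ : 0 < ρ) (s : ℝ) :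
    ∫⁻ t in Ici s, ENNReal.ofReal (ρ * exp (-ρ * t)) = ENNReal.ofReal (exp (-ρ * s)) := by
  rw [Measure.restrict_congr_set Ioi_ae_eq_Ici.symm, ← ofReal_integral_eq_lintegral_ofReal
    ((integrableOn_exp_mul_Ioi (neg_lt_zero.mpr hρ) s).const_mul ρ)
    (Eventually.of_forall fun t => by positivity), integral_const_mul,
    integral_exp_mul_Ioi (neg_lt_zero.mpr hρ)]
  congr 1
  field_simp

lemma lintegral_ofReal_mul_exp_mul_lintegral_Ioc (hρ : 0 < ρ) {g : ℝ → ℝ≥0∞}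
    (hg : AEMeasurable g (volume.restrict (Ioi 0))) :
    ∫⁻ t in Ioi 0, ENNReal.ofReal (ρ * exp (-ρ * t)) * ∫⁻ s in Ioc 0 t, g s
      = ∫⁻ s in Ioi 0, ENNReal.ofReal (exp (-ρ * s)) * g s := by
  set μ := volume.restrict (Ioi (0:ℝ))
  set K : ℝ → ℝ → ℝ≥0∞ := fun t s => ENNReal.ofReal (ρ * exp (-ρ * t)) * (Iic t).indicator g s
  have hK : AEMeasurable (Function.uncurry K) (μ.prod μ) := by
    have hind : AEMeasurable (fun p : ℝ × ℝ => {p : ℝ × ℝ | p.2 ≤ p.1}.indicator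
        (fun p => g p.2) p) (μ.prod μ) :=
      hg.comp_snd.indicator (measurableSet_le measurable_snd measurable_fst)
    have hexp : Measurable fun p : ℝ × ℝ => ENNReal.ofReal (ρ * exp (-ρ * p.1)) := by fun_prop
    refine (hexp.aemeasurable.mul hind).congr (ae_of_all _ ?_)
    rintro ⟨t, s⟩
    simp [K, Set.indicator_apply]
  have hinner : ∀ t, ∫⁻ s in Ioc 0 t, g s = ∫⁻ s, (Iic t).indicator g s ∂μ := fun t => by
    rw [lintegral_indicator measurableSet_Iic, Measure.restrict_restrict measurableSet_Iic,
      Iic_inter_Ioi]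
  have hswapped : ∀ s ∈ Ioi (0:ℝ), ∫⁻ t, K t s ∂μ = ENNReal.ofReal (exp (-ρ * s)) * g s := by
    intro s hs
    have : ∀ t, K t s = (Ici s).indicator (fun t => ENNReal.ofReal (ρ * exp (-ρ * t))) t * g s :=
      fun t => by by_cases hst : s ≤ t <;> simp [K, hst]
    simp_rw [this]
    rw [lintegral_mul_const _ ((by fun_prop : Measurable fun t => ENNReal.ofReal
        (ρ * exp (-ρ * t))).indicator measurableSet_Ici), lintegral_indicator measurableSet_Ici,
      Measure.restrict_restrict measurableSet_Ici,
      inter_eq_self_of_subset_left (Ici_subset_Ioi.mpr hs), lintegral_Ici_ofReal_mul_exp hρ]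
  calc ∫⁻ t in Ioi 0, ENNReal.ofReal (ρ * exp (-ρ * t)) * ∫⁻ s in Ioc 0 t, g s
      = ∫⁻ t, ∫⁻ s, K t s ∂μ ∂μ := by
        simp_rw [hinner, K]
        exact lintegral_congr fun t => (lintegral_const_mul' _ _ ENNReal.ofReal_ne_top).symm
    _ = ∫⁻ s, ∫⁻ t, K t s ∂μ ∂μ := lintegral_lintegral_swap hK
    _ = ∫⁻ s in Ioi 0, ENNReal.ofReal (exp (-ρ * s)) * g s :=
        setLIntegral_congr_fun measurableSet_Ioi hswapped

variable {f : ℝ → ℝ}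

lemma lintegral_exp_mul_eq_ofReal_mul_lintegral_primitive (hρ : 0 < ρ)
    (hf : LocallyIntegrableOn f (Ici 0)) (hf0 : ∀ᵐ s ∂(volume.restrict (Ici 0)), 0 ≤ f s) :
    ∫⁻ t in Ioi 0, ENNReal.ofReal (exp (-ρ * t) * f t) = ENNReal.ofReal ρ
      * ∫⁻ t in Ioi 0, ENNReal.ofReal (exp (-ρ * t) * ∫ s in (0:ℝ)..t, f s) := by
  have hprim : ∀ t > 0, ENNReal.ofReal (∫ s in (0:ℝ)..t, f s)
      = ∫⁻ s in Ioc 0 t, ENNReal.ofReal (f s) := fun t ht => by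
    rw [intervalIntegral.integral_of_le ht.le, ofReal_integral_eq_lintegral_ofReal
      (hf.integrableOn_Ioc t) (ae_restrict_of_ae_restrict_of_subset (fun x hx => hx.1.le) hf0)]
  have hfm : AEMeasurable f (volume.restrict (Ioi 0)) :=
    (hf.aestronglyMeasurable.mono_measure
      (Measure.restrict_mono Ioi_subset_Ici_self le_rfl)).aemeasurable
  calc ∫⁻ t in Ioi 0, ENNReal.ofReal (exp (-ρ * t) * f t)
      = ∫⁻ t in Ioi 0, ENNReal.ofReal (exp (-ρ * t)) * ENNReal.ofReal (f t) := by
        simp_rw [ENNReal.ofReal_mul (exp_pos _).le]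
    _ = ∫⁻ t in Ioi 0, ENNReal.ofReal (ρ * exp (-ρ * t))
          * ∫⁻ s in Ioc 0 t, ENNReal.ofReal (f s) :=
        (lintegral_ofReal_mul_exp_mul_lintegral_Ioc hρ hfm.ennreal_ofReal).symm
    _ = ∫⁻ t in Ioi 0, ENNReal.ofReal ρ
          * ENNReal.ofReal (exp (-ρ * t) * ∫ s in (0:ℝ)..t, f s) := by
        refine setLIntegral_congr_fun measurableSet_Ioi fun t ht => ?_
        rw [ENNReal.ofReal_mul (exp_pos _).le, hprim t ht, ENNReal.ofReal_mul hρ.le, mul_assoc]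
    _ = _ := lintegral_const_mul' _ _ ENNReal.ofReal_ne_top

lemma integral_exp_mul_eq_mul_integral_exp_mul_primitive (hρ : 0 < ρ)
    (hf : LocallyIntegrableOn f (Ici 0)) (hf0 : ∀ᵐ s ∂(volume.restrict (Ici 0)), 0 ≤ f s) :
    ∫ t in Ioi 0, exp (-ρ * t) * f t
      = ρ * ∫ t in Ioi 0, exp (-ρ * t) * ∫ s in (0:ℝ)..t, f s := by
  have hf0' : ∀ a b, 0 ≤ a → 0 ≤ᵐ[volume.restrict (Ioc a b)] f := fun a b ha =>
    ae_restrict_of_ae_restrict_of_subset (fun x hx => ha.trans hx.1.le) hf0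
  have hGmono : MonotoneOn (fun t => ∫ s in (0:ℝ)..t, f s) (Ici 0) := fun s hs t _ hst =>
    intervalIntegral.integral_mono_interval le_rfl hs hst (hf0' 0 t le_rfl)
      ((intervalIntegrable_iff_integrableOn_Ioc_of_le (hs.trans hst)).mpr (hf.integrableOn_Ioc t))
  have hexpm : AEStronglyMeasurable (fun t => exp (-ρ * t)) (volume.restrict (Ioi 0)) :=
    (by fun_prop : Continuous fun t => exp (-ρ * t)).aestronglyMeasurable
  have hmeas : AEStronglyMeasurable f (volume.restrict (Ioi 0)) :=
    hf.aestronglyMeasurable.mono_measure (Measure.restrict_mono Ioi_subset_Ici_self le_rfl)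
  rw [integral_eq_lintegral_of_nonneg_ae (f := fun t => exp (-ρ * t) * f t)
      ((ae_restrict_of_ae_restrict_of_subset Ioi_subset_Ici_self hf0).mono fun t ht =>
        mul_nonneg (exp_pos _).le ht) (hexpm.mul hmeas),
    integral_eq_lintegral_of_nonneg_ae (f := fun t => exp (-ρ * t) * ∫ s in (0:ℝ)..t, f s)
      ((ae_restrict_mem measurableSet_Ioi).mono fun t ht => mul_nonneg (exp_pos _).le
        (intervalIntegral.integral_nonneg_of_ae_restrict ht.le ?_))
      (hexpm.mul ((aemeasurable_restrict_of_monotoneOn measurableSet_Ioi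
        (hGmono.mono Ioi_subset_Ici_self)).aestronglyMeasurable)),
    lintegral_exp_mul_eq_ofReal_mul_lintegral_primitive hρ hf hf0, ENNReal.toReal_mul,
    ENNReal.toReal_ofReal hρ.le]
  exact ae_restrict_of_ae_restrict_of_subset Icc_subset_Ici_self hf0

end Discounting

section Asymptotics

variable {u : ℝ → ℝ} {ρ ε l : ℝ}

lemma isBigO_exp_neg_half_of_tendsto (hε : 0 < ε)
    (hexp : Tendsto (fun t => exp (ε * t) * exp (-ρ * t) * u (exp (l * t))) atTop (𝓝 0))
    (B : ℝ) :
    (fun t => exp (-ρ * t) * (u (exp (l * t)) * (t + B))) =O[atTop]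
      fun t => exp (-(ε / 2) * t) := by
  have hlin : Tendsto (fun t => (t + B) / exp (ε / 2 * t)) atTop (𝓝 0) := by
    refine IsLittleO.tendsto_div_nhds_zero (IsLittleO.add ?_ ?_)
    · simpa using isLittleO_pow_exp_pos_mul_atTop 1 (half_pos hε)
    · simpa using isLittleO_pow_exp_pos_mul_atTop 0 (half_pos hε) |>.const_mul_left B
  refine (((hexp.mul hlin).isBigO_one ℝ).mul (isBigO_refl (fun t => exp (-(ε / 2) * t)) _)
    ).congr (fun t => ?_) fun t => one_mul _
  have h2 : exp (ε * t) = exp (ε / 2 * t) * exp (ε / 2 * t) := by rw [← exp_add]; ring_nf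
  have h3 : exp (-(ε / 2) * t) = (exp (ε / 2 * t))⁻¹ := by rw [← exp_neg]; ring_nf
  rw [h2, h3]
  field_simp

end Asymptotics

lemma Adm.integral_comp_le {F u c : ℝ → ℝ} {k₀ l M : ℝ} (hc : Adm F k₀ c) (hl : 0 < l)
    (hM : 0 ≤ M) (hF : MonotoneOn F (Ici 0)) (hFle : ∀ x ≥ 0, F x ≤ l * x + M)
    (hucont : ContinuousOn u (Ici 0)) (humono : MonotoneOn u (Ici 0))
    (huconc : ConcaveOn ℝ (Ici 0) u) (hu0 : u 0 = 0) {t : ℝ} (ht : 0 ≤ t) :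
    ∫ s in (0:ℝ)..t, u (c s) ≤ u (exp (l * t)) * (t + (k₀ + M / l)) := by
  obtain ⟨hcl, hc0, k, hsol, hk⟩ := hc
  have hcI : ∀ t, IntegrableOn c (Icc 0 t) := fun t =>
    hcl.integrableOn_compact_subset Icc_subset_Ici_self isCompact_Icc
  have hcap : ∫ s in (0:ℝ)..t, c s ≤ (k₀ + M / l) * exp (l * t) :=
    hsol.integral_le_exp hl hM hF hFle
      (fun t ht => (uIcc_of_le ht ▸ hcI t).intervalIntegrable) hc0 hk ht
  have hcapdiv : (∫ s in (0:ℝ)..t, c s) / exp (l * t) ≤ k₀ + M / l :=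
    (div_le_iff₀ (exp_pos _)).mpr hcap
  calc ∫ s in (0:ℝ)..t, u (c s)
      ≤ u (exp (l * t)) * (t + (∫ s in (0:ℝ)..t, c s) / exp (l * t)) :=
        integral_comp_le_of_concaveOn hucont humono huconc hu0 ht (exp_pos _) (hcI t)
          (ae_restrict_of_ae_restrict_of_subset Icc_subset_Ici_self hc0)
    _ ≤ u (exp (l * t)) * (t + (k₀ + M / l)) := by
        gcongr
        exact hu0 ▸ humono self_mem_Ici (exp_pos _).le (exp_pos _).le

theorem stmt10_general (F u : ℝ → ℝ) (ρ L ε₀ Mh k₀ : ℝ)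
    (hρ : 0 < ρ) (hL : 0 < L) (hε₀ : 0 < ε₀) (hMh : 0 < Mh)
    (hFmono : StrictMonoOn F (Set.Ici 0))
    (hFsub : ∀ x ≥ (0:ℝ), F x ≤ (L + ε₀) * x + Mh)
    (hucont : ContinuousOn u (Set.Ici 0)) (humono : StrictMonoOn u (Set.Ici 0))
    (huconc : ConcaveOn ℝ (Set.Ici 0) u) (hu0 : u 0 = 0)
    (hexp : Filter.Tendsto
      (fun t => Real.exp (ε₀ * t) * Real.exp (-ρ * t) * u (Real.exp ((L + ε₀) * t)))
      Filter.atTop (nhds 0)) :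
    ∃ γ : ℝ, ∀ c : ℝ → ℝ, Adm F k₀ c →
      Filter.Tendsto (fun t => Real.exp (-ρ * t) * ∫ s in (0:ℝ)..t, u (c s))
        Filter.atTop (nhds 0) ∧
      Util ρ u c =
        ρ * ∫ t in Set.Ioi (0:ℝ), Real.exp (-ρ * t) * ∫ s in (0:ℝ)..t, u (c s) ∧
      Util ρ u c ≤ γ := by
  set l := L + ε₀
  set H : ℝ → ℝ := fun t => exp (-ρ * t) * (u (exp (l * t)) * (t + (k₀ + Mh / l)))
  have hHO := isBigO_exp_neg_half_of_tendsto hε₀ hexp (k₀ + Mh / l)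
  have hHcont : Continuous H :=
    have : Continuous fun t => u (exp (l * t)) :=
      hucont.comp_continuous (by fun_prop) fun t => (exp_pos _).le
    (by fun_prop : Continuous fun t => exp (-ρ * t)).mul (this.mul (by fun_prop))
  have hHint : IntegrableOn H (Ioi 0) :=
    integrable_of_isBigO_exp_neg (half_pos hε₀) hHcont.continuousOn hHO
  refine ⟨ρ * ∫ t in Ioi 0, H t, fun c hc => ?_⟩
  have hbound : ∀ t ≥ 0, exp (-ρ * t) * ∫ s in (0:ℝ)..t, u (c s) ≤ H t := fun t ht =>
    mul_le_mul_of_nonneg_left (hc.integral_comp_le (add_pos hL hε₀) hMh.le hFmono.monotoneOn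
      hFsub hucont humono.monotoneOn huconc hu0 ht) (exp_pos _).le
  obtain ⟨hcl, hc0, -⟩ := id hc
  have hf0 : ∀ᵐ s ∂(volume.restrict (Ici 0)), 0 ≤ u (c s) :=
    hc0.mono fun s hs => hu0 ▸ humono.monotoneOn self_mem_Ici hs hs
  have hnonneg : ∀ t ≥ 0, 0 ≤ exp (-ρ * t) * ∫ s in (0:ℝ)..t, u (c s) := fun t ht =>
    mul_nonneg (exp_pos _).le (intervalIntegral.integral_nonneg_of_ae_restrict ht
      (ae_restrict_of_ae_restrict_of_subset Icc_subset_Ici_self hf0))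
  have hid : Util ρ u c = ρ * ∫ t in Ioi 0, exp (-ρ * t) * ∫ s in (0:ℝ)..t, u (c s) :=
    integral_exp_mul_eq_mul_integral_exp_mul_primitive hρ
      (hcl.comp_of_concaveOn hucont humono.monotoneOn huconc hu0 hc0) hf0
  refine ⟨?_, hid, ?_⟩
  · refine tendsto_of_tendsto_of_tendsto_of_le_of_le' tendsto_const_nhds
      (hHO.trans_tendsto ?_) (eventually_ge_atTop 0 |>.mono hnonneg)
      (eventually_ge_atTop 0 |>.mono hbound)
    exact tendsto_exp_atBot.comp (tendsto_id.const_mul_atTop_of_neg (by linarith))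
  · rw [hid]
    exact mul_le_mul_of_nonneg_left (setIntegral_mono_of_nonneg (fun t ht => hnonneg t ht.le)
      (fun t ht => hbound t ht.le) hHint) hρ.le

theorem stmt10 (F u : ℝ → ℝ) (ρ L ε₀ Mh k₀ : ℝ)
    (hρ : 0 < ρ) (hL : 0 < L) (hε₀ : 0 < ε₀) (hMh : 0 < Mh) (hk₀ : 0 ≤ k₀)
    (hFmono : StrictMonoOn F (Set.Ici 0)) (hF0 : F 0 = 0)
    (hFsub : ∀ x ≥ (0:ℝ), F x ≤ (L + ε₀) * x + Mh)
    (hucont : ContinuousOn u (Set.Ici 0)) (humono : StrictMonoOn u (Set.Ici 0))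
    (huconc : ConcaveOn ℝ (Set.Ici 0) u) (hu0 : u 0 = 0)
    (hulim : Filter.Tendsto u Filter.atTop Filter.atTop)
    (hexp : Filter.Tendsto
      (fun t => Real.exp (ε₀ * t) * Real.exp (-ρ * t) * u (Real.exp ((L + ε₀) * t)))
      Filter.atTop (nhds 0)) :
    ∃ γ : ℝ, ∀ c : ℝ → ℝ, Adm F k₀ c →
      Filter.Tendsto (fun t => Real.exp (-ρ * t) * ∫ s in (0:ℝ)..t, u (c s))
        Filter.atTop (nhds 0) ∧
      Util ρ u c =
        ρ * ∫ t in Set.Ioi (0:ℝ), Real.exp (-ρ * t) * ∫ s in (0:ℝ)..t, u (c s) ∧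
      Util ρ u c ≤ γ :=
  stmt10_general F u ρ L ε₀ Mh k₀ hρ hL hε₀ hMh hFmono hFsub hucont humono huconc hu0 hexp
end
end

section
/- Suppose F is Lipschitz with constant M̄. Let k₀ > 0, T > 0, and (γₙ), γ in L¹_loc([0,∞)) with γₙ ⇀ γ weakly in L¹([0,T]). Let κ = k(·;k₀,γ) and κₙ = k(·;k₀,γₙ) solve the state equation k' = F(k) − control, k(0)=k₀. Then for every t ∈ [0,T]: limsup_n κₙ(t) ≤ κ(t). In particular, if each κₙ ≥ 0 on [0,T], then κ ≥ 0 on [0,T]. -/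
/-!
With `Eₙ(t) = ∫₀ᵗ (γ - γₙ)`, the difference of the two solutions satisfies
`κₙ(t) - κ(t) = ∫₀ᵗ (F(κₙ) - F(κ)) + Eₙ(t)`, so the integral form of Gronwall's inequality gives
`|κₙ(t) - κ(t)| ≤ |Eₙ(t)| + M e^{Mt} ∫₀ᵗ |Eₙ|`. Testing the weak convergence against `χ_{[0,s]}`
gives `Eₙ(s) → 0` for each `s`. The uniform boundedness principle, applied to the functionals
`g ↦ ∫ g γₙ` on bounded continuous functions, bounds `Eₙ` uniformly on `[0, T]`, since
indicators of closed intervals are pointwise limits of thickened indicators. By dominated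
convergence the right-hand side tends to `0`, so in fact `κₙ(t) → κ(t)`.
-/

open MeasureTheory

/-- Weak convergence in `L¹(S)`: integrals against every bounded measurable
test function converge. -/
def WeakL1On (fn : ℕ → ℝ → ℝ) (f : ℝ → ℝ) (S : Set ℝ) : Prop :=
  ∀ g : ℝ → ℝ, Measurable g → (∃ C, ∀ x, |g x| ≤ C) →
    Filter.Tendsto (fun n => ∫ x in S, g x * fn n x) Filter.atTop
      (nhds (∫ x in S, g x * f x))

open Filter Set Topology BoundedContinuousFunction

lemma IsClosed.exists_seq_boundedContinuous_tendsto_indicator {X : Type*} [PseudoMetricSpace X]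
    {K : Set X} (hK : IsClosed K) :
    ∃ g : ℕ → X →ᵇ ℝ, (∀ k, ‖g k‖ ≤ 1) ∧
      ∀ x, Tendsto (fun k => g k x) atTop (𝓝 (K.indicator 1 x)) := by
  have hδ : ∀ k : ℕ, (0 : ℝ) < 1 / (k + 1) := fun k => Nat.one_div_pos_of_nat
  have hbound : ∀ k x, ‖((thickenedIndicator (hδ k) K x : NNReal) : ℝ)‖ ≤ 1 := fun k x => by
    simpa using thickenedIndicator_le_one (hδ k) K x
  refine ⟨fun k => ofNormedAddCommGroup _
      (NNReal.continuous_coe.comp (thickenedIndicator (hδ k) K).continuous) 1 (hbound k),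
    fun k => norm_ofNormedAddCommGroup_le _ zero_le_one _, fun x => ?_⟩
  have := (NNReal.continuous_coe.tendsto _).comp <| tendsto_pi_nhds.mp
    (thickenedIndicator_tendsto_indicator_closure hδ tendsto_one_div_add_atTop_nhds_zero_nat K) x
  rw [hK.closure_eq] at this
  convert this using 2
  · rfl
  · by_cases hx : x ∈ K <;> simp [hx]


namespace MeasureTheory.Integrable

variable {X : Type*} [PseudoMetricSpace X] [MeasurableSpace X] [OpensMeasurableSpace X]
  {μ : Measure X} {h : X → ℝ}

lemma bdd_mul_boundedContinuous (hh : Integrable h μ) (g : X →ᵇ ℝ) :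
    Integrable (fun x => g x * h x) μ :=
  hh.bdd_mul g.continuous.aestronglyMeasurable (.of_forall g.norm_coe_le_norm)

noncomputable def integralMulCLM (hh : Integrable h μ) : (X →ᵇ ℝ) →L[ℝ] ℝ :=
  LinearMap.mkContinuous
    { toFun g := ∫ x, g x * h x ∂μ
      map_add' g₁ g₂ := by
        simp only [coe_add, Pi.add_apply, add_mul]
        exact integral_add (hh.bdd_mul_boundedContinuous g₁) (hh.bdd_mul_boundedContinuous g₂)
      map_smul' c g := by
        simp only [coe_smul, smul_eq_mul, mul_assoc, RingHom.id_apply]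
        exact integral_const_mul c _ }
    (∫ x, |h x| ∂μ) fun g => by
      calc ‖∫ x, g x * h x ∂μ‖ ≤ ∫ x, ‖g‖ * |h x| ∂μ := by
            refine norm_integral_le_of_norm_le (hh.abs.const_mul _) (.of_forall fun x => ?_)
            rw [norm_mul, Real.norm_eq_abs]
            exact mul_le_mul_of_nonneg_right (g.norm_coe_le_norm x) (abs_nonneg _)
        _ = (∫ x, |h x| ∂μ) * ‖g‖ := by rw [integral_const_mul, mul_comm]

lemma abs_setIntegral_le_of_forall_abs_integral_mul_le (hh : Integrable h μ)
    {K : Set X} (hK : IsClosed K) {C : ℝ}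
    (hC : ∀ g : X →ᵇ ℝ, ‖g‖ ≤ 1 → |∫ x, g x * h x ∂μ| ≤ C) :
    |∫ x in K, h x ∂μ| ≤ C := by
  obtain ⟨g, hg_norm, hg_lim⟩ := hK.exists_seq_boundedContinuous_tendsto_indicator
  have hlim : Tendsto (fun k => ∫ x, g k x * h x ∂μ) atTop
      (𝓝 (∫ x, K.indicator 1 x * h x ∂μ)) := by
    refine tendsto_integral_of_dominated_convergence (fun x => |h x|)
      (fun k => (hh.bdd_mul_boundedContinuous (g k)).aestronglyMeasurable) hh.abs
      (fun k => .of_forall fun x => ?_) (.of_forall fun x => (hg_lim x).mul_const _)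
    rw [norm_mul, Real.norm_eq_abs]
    exact mul_le_of_le_one_left (abs_nonneg _) ((g k).norm_coe_le_norm x |>.trans (hg_norm k))
  have hind : (fun x => K.indicator 1 x * h x) = K.indicator h := by
    ext x
    by_cases hx : x ∈ K <;> simp [hx]
  rw [hind, integral_indicator hK.measurableSet] at hlim
  exact le_of_tendsto hlim.abs (.of_forall fun k => hC _ (hg_norm k))

lemma exists_forall_abs_setIntegral_le {u : ℕ → X → ℝ} (hu : ∀ n, Integrable (u n) μ)
    (hbdd : ∀ g : X →ᵇ ℝ, ∃ C, ∀ n, |∫ x, g x * u n x ∂μ| ≤ C) :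
    ∃ C, ∀ n K, IsClosed K → |∫ x in K, u n x ∂μ| ≤ C := by
  obtain ⟨C, hC⟩ := banach_steinhaus (g := fun n => (hu n).integralMulCLM) hbdd
  refine ⟨C, fun n K hK => (hu n).abs_setIntegral_le_of_forall_abs_integral_mul_le hK
    fun g hg => ?_⟩
  calc |∫ x, g x * u n x ∂μ| = ‖(hu n).integralMulCLM g‖ := rfl
    _ ≤ ‖(hu n).integralMulCLM‖ * ‖g‖ := ContinuousLinearMap.le_opNorm _ _
    _ ≤ C := (mul_le_of_le_one_right (norm_nonneg _) hg).trans (hC n)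

end MeasureTheory.Integrable

namespace WeakL1On

variable {fn : ℕ → ℝ → ℝ} {f : ℝ → ℝ}

lemma tendsto_setIntegral {S A : Set ℝ} (hw : WeakL1On fn f S) (hA : MeasurableSet A)
    (hAS : A ⊆ S) :
    Tendsto (fun n => ∫ x in A, fn n x) atTop (𝓝 (∫ x in A, f x)) := by
  have hind : ∀ φ : ℝ → ℝ, ∫ x in S, A.indicator 1 x * φ x = ∫ x in A, φ x := fun φ => by
    have : (fun x => A.indicator 1 x * φ x) = A.indicator φ := by
      ext x
      by_cases hx : x ∈ A <;> simp [hx]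
    rw [this, setIntegral_indicator hA, inter_eq_right.mpr hAS]
  have hbdd : ∀ x, |A.indicator (1 : ℝ → ℝ) x| ≤ 1 := fun x => by
    by_cases hx : x ∈ A <;> simp [hx]
  simpa only [hind] using hw _ (measurable_one.indicator hA) ⟨1, hbdd⟩

lemma exists_forall_abs_setIntegral_le {S : Set ℝ} (hw : WeakL1On fn f S)
    (hint : ∀ n, IntegrableOn (fn n) S) :
    ∃ C, ∀ n K, IsClosed K → |∫ x in K ∩ S, fn n x| ≤ C := by
  obtain ⟨C, hC⟩ := Integrable.exists_forall_abs_setIntegral_le hint fun g => by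
    obtain ⟨C, hC⟩ := (hw g g.continuous.measurable ⟨‖g‖, g.norm_coe_le_norm⟩).abs.bddAbove_range
    exact ⟨C, fun n => hC ⟨n, rfl⟩⟩
  exact ⟨C, fun n K hK => by simpa [Measure.restrict_restrict hK.measurableSet] using hC n K hK⟩

variable {a b : ℝ}

lemma tendsto_intervalIntegral (hw : WeakL1On fn f (Icc a b)) {s : ℝ} (hs : s ∈ Icc a b) :
    Tendsto (fun n => ∫ x in a..s, fn n x) atTop (𝓝 (∫ x in a..s, f x)) := by
  simpa only [intervalIntegral.integral_of_le hs.1] using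
    hw.tendsto_setIntegral measurableSet_Ioc
      (Ioc_subset_Icc_self.trans (Icc_subset_Icc_right hs.2))

lemma exists_forall_abs_intervalIntegral_le (hw : WeakL1On fn f (Icc a b))
    (hint : ∀ n, IntegrableOn (fn n) (Icc a b)) :
    ∃ C, ∀ n, ∀ s ∈ Icc a b, |∫ x in a..s, fn n x| ≤ C := by
  obtain ⟨C, hC⟩ := hw.exists_forall_abs_setIntegral_le hint
  refine ⟨C, fun n s hs => ?_⟩
  have := hC n (Icc a s) isClosed_Icc
  rwa [inter_eq_left.mpr (Icc_subset_Icc_right hs.2), integral_Icc_eq_integral_Ioc,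
    ← intervalIntegral.integral_of_le hs.1] at this

lemma tendsto_intervalIntegral_sub (hw : WeakL1On fn f (Icc a b)) (hf : IntegrableOn f (Icc a b))
    (hfn : ∀ n, IntegrableOn (fn n) (Icc a b)) {s : ℝ} (hs : s ∈ Icc a b) :
    Tendsto (fun n => ∫ x in a..s, (f x - fn n x)) atTop (𝓝 0) := by
  have hsub : uIcc a s ⊆ Icc a b := uIcc_subset_Icc (left_mem_Icc.2 (hs.1.trans hs.2)) hs
  simp_rw [intervalIntegral.integral_sub (hf.mono_set hsub).intervalIntegrable
    ((hfn _).mono_set hsub).intervalIntegrable]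
  simpa only [sub_self] using (hw.tendsto_intervalIntegral hs).const_sub (∫ x in a..s, f x)

lemma tendsto_integral_abs_intervalIntegral_sub (hw : WeakL1On fn f (Icc a b))
    (hf : IntegrableOn f (Icc a b)) (hfn : ∀ n, IntegrableOn (fn n) (Icc a b)) {t : ℝ}
    (ht : t ∈ Icc a b) :
    Tendsto (fun n => ∫ r in a..t, |∫ x in a..r, (f x - fn n x)|) atTop (𝓝 0) := by
  obtain ⟨C, hC⟩ := hw.exists_forall_abs_intervalIntegral_le hfn
  have hab : a ≤ b := ht.1.trans ht.2
  have hsub : ∀ r ∈ uIoc a t, r ∈ Icc a b := fun r hr => by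
    rw [uIoc_of_le ht.1] at hr
    exact ⟨hr.1.le, hr.2.trans ht.2⟩
  have hbound : ∀ n, ∀ r ∈ Icc a b, |∫ x in a..r, (f x - fn n x)| ≤ C + C := fun n r hr => by
    have hfC : |∫ x in a..r, f x| ≤ C :=
      le_of_tendsto (hw.tendsto_intervalIntegral hr).abs (.of_forall fun n => hC n r hr)
    have hr_sub : uIcc a r ⊆ Icc a b := uIcc_subset_Icc (left_mem_Icc.2 hab) hr
    rw [intervalIntegral.integral_sub (hf.mono_set hr_sub).intervalIntegrable
      ((hfn n).mono_set hr_sub).intervalIntegrable]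
    exact (abs_sub _ _).trans (add_le_add hfC (hC n r hr))
  have hcont : ∀ n, ContinuousOn (fun r => ∫ x in a..r, (f x - fn n x)) (Icc a b) := fun n => by
    have hint : IntegrableOn (fun x => f x - fn n x) (uIcc a b) := by
      rw [uIcc_of_le hab]
      exact hf.sub (hfn n)
    simpa only [uIcc_of_le hab] using intervalIntegral.continuousOn_primitive_interval hint
  simpa using intervalIntegral.tendsto_integral_filter_of_dominated_convergence (fun _ => C + C)
    (.of_forall fun n => ((hcont n).abs.mono hsub).aestronglyMeasurable measurableSet_uIoc)
    (.of_forall fun n => .of_forall fun r hr => by simpa using hbound n r (hsub r hr))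
    intervalIntegrable_const
    (.of_forall fun r hr => (hw.tendsto_intervalIntegral_sub hf hfn (hsub r hr)).abs)

end WeakL1On

open Real in
lemma le_add_mul_exp_mul_integral_of_le_add_mul_integral {φ b : ℝ → ℝ} {M t : ℝ} (hM : 0 ≤ M)
    (ht : 0 ≤ t) (hφ : ContinuousOn φ (Icc 0 t)) (hb : IntervalIntegrable b volume 0 t)
    (hb₀ : ∀ r ∈ Icc 0 t, 0 ≤ b r) (h : ∀ r ∈ Icc 0 t, φ r ≤ b r + M * ∫ s in 0..r, φ s) :
    φ t ≤ b t + M * exp (M * t) * ∫ s in 0..t, b s := by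
  set Ψ : ℝ → ℝ := fun r => ∫ s in 0..r, φ s
  have hΨ_cont : ContinuousOn Ψ (Icc 0 t) := by
    simpa only [uIcc_of_le ht] using
      intervalIntegral.continuousOn_primitive_interval' (hφ.intervalIntegrable_of_Icc ht)
        left_mem_uIcc
  have hΨ_deriv : ∀ r ∈ Ioo 0 t, HasDerivAt Ψ (φ r) r := fun r hr =>
    intervalIntegral.integral_hasDerivAt_right
      ((hφ.mono (Icc_subset_Icc_right hr.2.le)).intervalIntegrable_of_Icc hr.1.le)
      ((hφ.mono Ioo_subset_Icc_self).stronglyMeasurableAtFilter isOpen_Ioo r hr)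
      (hφ.continuousAt (Icc_mem_nhds hr.1 hr.2))
  -- `(e^{-Mr} Ψ r)' = e^{-Mr} (φ r - M Ψ r) ≤ b r` on `[0, t]`.
  have hweighted : exp (-M * t) * Ψ t ≤ ∫ r in 0..t, b r := by
    have hexp_cont : Continuous fun r => exp (-M * r) := by fun_prop
    have hG'_int : IntervalIntegrable (fun r => exp (-M * r) * (φ r - M * Ψ r)) volume 0 t :=
      (hexp_cont.continuousOn.mul (hφ.sub (hΨ_cont.const_smul M))).intervalIntegrable_of_Icc ht
    have hFTC := intervalIntegral.integral_eq_sub_of_hasDerivAt_of_le ht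
      (f := fun r => exp (-M * r) * Ψ r) (f' := fun r => exp (-M * r) * (φ r - M * Ψ r))
      (hexp_cont.continuousOn.mul hΨ_cont)
      (fun r hr => (((hasDerivAt_id r).const_mul (-M)).exp.mul (hΨ_deriv r hr)).congr_deriv
        (by simp only [id]; ring))
      hG'_int
    simp only [Ψ, intervalIntegral.integral_same, mul_zero, sub_zero] at hFTC
    rw [← hFTC]
    refine intervalIntegral.integral_mono_on ht hG'_int hb fun r hr => ?_
    calc exp (-M * r) * (φ r - M * Ψ r) ≤ exp (-M * r) * b r :=
          mul_le_mul_of_nonneg_left (by linarith [h r hr]) (exp_pos _).le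
      _ ≤ b r := mul_le_of_le_one_left (hb₀ r hr) (exp_le_one_iff.2 (by nlinarith [hr.1]))
  have hΨt : Ψ t ≤ exp (M * t) * ∫ r in 0..t, b r := by
    calc Ψ t = exp (M * t) * (exp (-M * t) * Ψ t) := by
          rw [← mul_assoc, ← exp_add, neg_mul, add_neg_cancel, exp_zero, one_mul]
      _ ≤ _ := mul_le_mul_of_nonneg_left hweighted (exp_pos _).le
  calc φ t ≤ b t + M * Ψ t := h t ⟨ht, le_rfl⟩
    _ ≤ b t + M * exp (M * t) * ∫ r in 0..t, b r := by
      rw [mul_assoc]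
      gcongr

open Real in
lemma abs_sub_le_of_eq_add_integral {F c₁ c₂ κ₁ κ₂ : ℝ → ℝ} {M k₀ t : ℝ} (hM : 0 ≤ M)
    (ht : 0 ≤ t) (hLip : ∀ x y, |F x - F y| ≤ M * |x - y|)
    (hc₁ : IntegrableOn c₁ (Icc 0 t)) (hc₂ : IntegrableOn c₂ (Icc 0 t))
    (hκ₁ : ContinuousOn κ₁ (Icc 0 t)) (hκ₂ : ContinuousOn κ₂ (Icc 0 t))
    (h₁ : ∀ r ∈ Icc 0 t, κ₁ r = k₀ + ∫ s in 0..r, (F (κ₁ s) - c₁ s))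
    (h₂ : ∀ r ∈ Icc 0 t, κ₂ r = k₀ + ∫ s in 0..r, (F (κ₂ s) - c₂ s)) :
    |κ₁ t - κ₂ t| ≤ |∫ s in 0..t, (c₂ s - c₁ s)| +
      M * exp (M * t) * ∫ r in 0..t, |∫ s in 0..r, (c₂ s - c₁ s)| := by
  have hF : Continuous F :=
    (LipschitzWith.of_dist_le_mul (K := M.toNNReal) fun x y => by
      simpa only [Real.dist_eq, Real.coe_toNNReal M hM] using hLip x y).continuous
  set E : ℝ → ℝ := fun r => ∫ s in 0..r, (c₂ s - c₁ s)
  have hE_cont : ContinuousOn E (Icc 0 t) := by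
    have hint : IntegrableOn (fun s => c₂ s - c₁ s) (uIcc 0 t) := by
      rw [uIcc_of_le ht]
      exact hc₂.sub hc₁
    simpa only [uIcc_of_le ht] using intervalIntegral.continuousOn_primitive_interval hint
  have hφ_cont : ContinuousOn (fun r => |κ₁ r - κ₂ r|) (Icc 0 t) := (hκ₁.sub hκ₂).abs
  refine le_add_mul_exp_mul_integral_of_le_add_mul_integral hM ht hφ_cont
    (hE_cont.abs.intervalIntegrable_of_Icc ht) (fun _ _ => abs_nonneg _) fun r hr => ?_
  have hsub : Icc 0 r ⊆ Icc 0 t := Icc_subset_Icc_right hr.2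
  have hFκ₁ : IntervalIntegrable (fun s => F (κ₁ s)) volume 0 r :=
    ((hF.comp_continuousOn hκ₁).mono hsub).intervalIntegrable_of_Icc hr.1
  have hFκ₂ : IntervalIntegrable (fun s => F (κ₂ s)) volume 0 r :=
    ((hF.comp_continuousOn hκ₂).mono hsub).intervalIntegrable_of_Icc hr.1
  have hc₁r : IntervalIntegrable c₁ volume 0 r :=
    (hc₁.mono_set (by rwa [uIcc_of_le hr.1])).intervalIntegrable
  have hc₂r : IntervalIntegrable c₂ volume 0 r :=
    (hc₂.mono_set (by rwa [uIcc_of_le hr.1])).intervalIntegrable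
  have hdiff : κ₁ r - κ₂ r = (∫ s in 0..r, (F (κ₁ s) - F (κ₂ s))) + E r := by
    rw [h₁ r hr, h₂ r hr, intervalIntegral.integral_sub hFκ₁ hc₁r,
      intervalIntegral.integral_sub hFκ₂ hc₂r, intervalIntegral.integral_sub hFκ₁ hFκ₂]
    simp only [E, intervalIntegral.integral_sub hc₂r hc₁r]
    ring
  have hLip_int : |∫ s in 0..r, (F (κ₁ s) - F (κ₂ s))| ≤ M * ∫ s in 0..r, |κ₁ s - κ₂ s| := by
    rw [← intervalIntegral.integral_const_mul]
    refine (intervalIntegral.abs_integral_le_integral_abs hr.1).trans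
      (intervalIntegral.integral_mono_on hr.1 (hFκ₁.sub hFκ₂).abs ?_ fun s _ => hLip _ _)
    exact ((hφ_cont.mono hsub).intervalIntegrable_of_Icc hr.1).const_mul M
  rw [hdiff]
  linarith [abs_add_le (∫ s in 0..r, (F (κ₁ s) - F (κ₂ s))) (E r)]

theorem stmt17_general (F γ : ℝ → ℝ) (γn : ℕ → ℝ → ℝ) (κ : ℝ → ℝ) (κn : ℕ → ℝ → ℝ)
    (M k₀ T : ℝ) (hM : 0 ≤ M)
    (hLip : ∀ x y, |F x - F y| ≤ M * |x - y|)
    (hγ : LocallyIntegrableOn γ (Set.Ici 0))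
    (hγn : ∀ n, LocallyIntegrableOn (γn n) (Set.Ici 0))
    (hweak : WeakL1On γn γ (Set.Icc 0 T))
    (hκcont : ContinuousOn κ (Set.Ici 0))
    (hκsol : ∀ t ≥ (0:ℝ), κ t = k₀ + ∫ s in (0:ℝ)..t, (F (κ s) - γ s))
    (hκncont : ∀ n, ContinuousOn (κn n) (Set.Ici 0))
    (hκnsol : ∀ n, ∀ t ≥ (0:ℝ), κn n t = k₀ + ∫ s in (0:ℝ)..t, (F (κn n s) - γn n s)) :
    (∀ t ∈ Set.Icc (0:ℝ) T, Filter.limsup (fun n => κn n t) Filter.atTop ≤ κ t) ∧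
    ((∀ n, ∀ t ∈ Set.Icc (0:ℝ) T, 0 ≤ κn n t) → ∀ t ∈ Set.Icc (0:ℝ) T, 0 ≤ κ t) := by
  have hγT : IntegrableOn γ (Icc 0 T) :=
    hγ.integrableOn_compact_subset Icc_subset_Ici_self isCompact_Icc
  have hγnT : ∀ n, IntegrableOn (γn n) (Icc 0 T) := fun n =>
    (hγn n).integrableOn_compact_subset Icc_subset_Ici_self isCompact_Icc
  have htendsto : ∀ t ∈ Icc 0 T, Tendsto (fun n => κn n t) atTop (𝓝 (κ t)) := by
    intro t ht
    have hsub : Icc 0 t ⊆ Icc 0 T := Icc_subset_Icc_right ht.2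
    have hstab : ∀ n, |κn n t - κ t| ≤ |∫ s in 0..t, (γ s - γn n s)| +
        M * Real.exp (M * t) * ∫ r in 0..t, |∫ s in 0..r, (γ s - γn n s)| := fun n =>
      abs_sub_le_of_eq_add_integral hM ht.1 hLip ((hγnT n).mono_set hsub) (hγT.mono_set hsub)
        ((hκncont n).mono Icc_subset_Ici_self) (hκcont.mono Icc_subset_Ici_self)
        (fun r hr => hκnsol n r hr.1) (fun r hr => hκsol r hr.1)
    have hbound_lim := (hweak.tendsto_intervalIntegral_sub hγT hγnT ht).abs.add
      ((hweak.tendsto_integral_abs_intervalIntegral_sub hγT hγnT ht).const_mul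
        (M * Real.exp (M * t)))
    rw [abs_zero, mul_zero, add_zero] at hbound_lim
    exact tendsto_sub_nhds_zero_iff.mp (squeeze_zero_norm hstab hbound_lim)
  exact ⟨fun t ht => (htendsto t ht).limsup_eq.le,
    fun hpos t ht => ge_of_tendsto' (htendsto t ht) fun n => hpos n t ht⟩

theorem stmt17 (F γ : ℝ → ℝ) (γn : ℕ → ℝ → ℝ) (κ : ℝ → ℝ) (κn : ℕ → ℝ → ℝ)
    (M k₀ T : ℝ) (hM : 0 ≤ M) (hk₀ : 0 < k₀) (hT : 0 < T)
    (hLip : ∀ x y, |F x - F y| ≤ M * |x - y|)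
    (hγ : LocallyIntegrableOn γ (Set.Ici 0))
    (hγn : ∀ n, LocallyIntegrableOn (γn n) (Set.Ici 0))
    (hweak : WeakL1On γn γ (Set.Icc 0 T))
    (hκcont : ContinuousOn κ (Set.Ici 0))
    (hκsol : ∀ t ≥ (0:ℝ), κ t = k₀ + ∫ s in (0:ℝ)..t, (F (κ s) - γ s))
    (hκncont : ∀ n, ContinuousOn (κn n) (Set.Ici 0))
    (hκnsol : ∀ n, ∀ t ≥ (0:ℝ), κn n t = k₀ + ∫ s in (0:ℝ)..t, (F (κn n s) - γn n s)) :
    (∀ t ∈ Set.Icc (0:ℝ) T, Filter.limsup (fun n => κn n t) Filter.atTop ≤ κ t) ∧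
    ((∀ n, ∀ t ∈ Set.Icc (0:ℝ) T, 0 ≤ κn n t) → ∀ t ∈ Set.Icc (0:ℝ) T, 0 ≤ κ t) :=
  stmt17_general F γ γn κ κn M k₀ T hM hLip hγ hγn hweak hκcont hκsol hκncont hκnsol
end

section
/- Under the standing assumptions, the value function satisfies Bellman's dynamic programming principle: for every τ > 0 and every k₀ ≥ 0, V(k₀) = sup_{c ∈ Λ(k₀)} { ∫₀^τ e^{−ρt} u(c(t)) dt + e^{−ρτ} V(k(τ; k₀, c)) }. -/
open MeasureTheory

noncomputable section

/-!
Admissibility is stable under the two operations behind dynamic programming: the tail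
`c (· + τ)` of an admissible control at `k₀` is admissible at `k τ`, and following `c` up to `τ`
and then any control admissible at `k τ` is admissible at `k₀`. The utility splits additively
along this decomposition as soon as its defining integral converges, and then both inequalities
of the principle follow from the definition of `Val` as a supremum.

Convergence is the analytic part. Grönwall's inequality bounds the cumulative consumption up to
time `t` by `(k₀ + Mh / δ) e^{δ t}`, where `δ = L + ε₀`. On `[n, n + 1)` concavity of `u` gives
`u x ≤ u M (1 + x / M)` with `M = e^{δ (n + 1)}`, so the discounted utility on that block is at
most `e^{-ρ n} u (e^{δ (n + 1)}) (1 + k₀ + Mh / δ)`, which is summable by the growth condition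
on `u`.
-/

open Set Filter Real Topology

section Calculus

lemma intervalIntegrable_of_locallyIntegrableOn_Ici {c : ℝ → ℝ} {a b : ℝ}
    (hc : LocallyIntegrableOn c (Ici 0)) (ha : 0 ≤ a) (hb : 0 ≤ b) :
    IntervalIntegrable c volume a b :=
  (hc.integrableOn_compact_subset (fun _ hx => (le_min ha hb).trans hx.1)
    isCompact_uIcc).intervalIntegrable

lemma locallyIntegrableOn_Ici_of_forall_integrableOn_Icc {c : ℝ → ℝ} {a : ℝ}
    (h : ∀ b, IntegrableOn c (Icc a b)) : LocallyIntegrableOn c (Ici a) := by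
  rw [locallyIntegrableOn_iff isClosed_Ici.isLocallyClosed]
  intro K hK hKc
  obtain ⟨b, hb⟩ := hKc.bddAbove
  exact (h b).mono_set fun x hx => ⟨hK hx, hb hx⟩

lemma integrableOn_comp_add_right {f : ℝ → ℝ} {s : Set ℝ} (hf : IntegrableOn f s) (τ : ℝ) :
    IntegrableOn (fun t => f (t + τ)) ((· + τ) ⁻¹' s) :=
  ((measurePreserving_add_right volume τ).integrableOn_comp_preimage
    (measurableEmbedding_addRight τ)).2 hf

lemma le_exp_of_le_add_integral {k : ℝ → ℝ} {k₀ δ Mh t : ℝ} (hk : Continuous k) (hδ : 0 < δ)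
    (hMh : 0 ≤ Mh) (hle : ∀ s ≥ 0, k s ≤ k₀ + Mh * s + δ * ∫ r in (0:ℝ)..s, k r) (ht : 0 ≤ t) :
    k₀ + Mh * t + δ * ∫ r in (0:ℝ)..t, k r ≤ (k₀ + Mh / δ) * exp (δ * t) := by
  set φ : ℝ → ℝ := fun s => k₀ + Mh * s + δ * ∫ r in (0:ℝ)..s, k r
  have hφ : ∀ s, HasDerivAt φ (Mh + δ * k s) s := fun s => by
    have := (((hasDerivAt_id s).const_mul Mh).const_add k₀).add
      ((hk.integral_hasStrictDerivAt 0 s).hasDerivAt.const_mul δ)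
    rwa [mul_one] at this
  have hbound := le_gronwallBound_of_liminf_deriv_right_le (f := φ) (δ := k₀) (K := δ) (ε := Mh)
    (a := 0) (b := t)
    (fun s _ => (hφ s).continuousAt.continuousWithinAt)
    (fun s _ _ hr => (hφ s).hasDerivWithinAt.liminf_right_slope_le hr) (by simp [φ])
    (fun s hs => by nlinarith [hle s hs.1]) t ⟨ht, le_rfl⟩
  rw [sub_zero, gronwallBound_of_K_ne_0 hδ.ne'] at hbound
  nlinarith [div_nonneg hMh hδ.le]

end Calculus

section Utility

variable {u c : ℝ → ℝ} {ρ δ A : ℝ}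

lemma le_mul_one_add_div_of_concaveOn (hmono : MonotoneOn u (Ici 0))
    (hconc : ConcaveOn ℝ (Ici 0) u) (hu0 : 0 ≤ u 0) {M x : ℝ} (hM : 0 < M) (hx : 0 ≤ x) :
    u x ≤ u M * (1 + x / M) := by
  have huM : 0 ≤ u M := hu0.trans (hmono self_mem_Ici hM.le hM.le)
  rcases le_or_gt x M with hxM | hMx
  · calc u x ≤ u M := hmono hx hM.le hxM
      _ ≤ u M * (1 + x / M) := le_mul_of_one_le_right huM (by simp [div_nonneg hx hM.le])
  · -- the chord from `0` to `x` lies below the graph at `M`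
    have hchord := hconc.neg.secant_mono_aux1 self_mem_Ici (le_of_lt (hM.trans hMx)) hM hMx
    have : u x ≤ u M * x / M := by
      rw [le_div_iff₀ hM]
      simp only [Pi.neg_apply, sub_zero] at hchord
      nlinarith
    rw [mul_add, mul_one, mul_div_assoc']
    linarith

lemma summable_exp_mul_utility {ε₀ : ℝ} (hε₀ : 0 < ε₀) (hmono : MonotoneOn u (Ici 0))
    (hu0 : 0 ≤ u 0)
    (hexp : Tendsto (fun t => exp (ε₀ * t) * exp (-ρ * t) * u (exp (δ * t))) atTop (𝓝 0)) :
    Summable fun n : ℕ => exp (-ρ * n) * u (exp (δ * (n + 1))) := by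
  have hev : ∀ᶠ n : ℕ in atTop,
      exp (ε₀ * (n + 1)) * exp (-ρ * (n + 1)) * u (exp (δ * (n + 1))) ≤ 1 :=
    (hexp.comp (tendsto_atTop_add_const_right _ 1 tendsto_natCast_atTop_atTop)).eventually
      (eventually_le_nhds one_pos)
  refine Summable.of_norm_bounded_eventually_nat
    ((summable_exp_nat_mul_iff.2 (neg_lt_zero.2 hε₀)).mul_left (exp (ρ - ε₀))) ?_
  filter_upwards [hev] with n hn
  have hu : 0 ≤ u (exp (δ * (n + 1))) :=
    hu0.trans (hmono self_mem_Ici (exp_pos _).le (exp_pos _).le)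
  have hexp_eq : exp (-ρ * n) =
      exp (ρ - ε₀) * exp (n * -ε₀) * (exp (ε₀ * (n + 1)) * exp (-ρ * (n + 1))) := by
    simp only [← exp_add]; ring_nf
  rw [norm_of_nonneg (by positivity), hexp_eq, mul_assoc, mul_assoc]
  refine mul_le_mul_of_nonneg_left ?_ (exp_pos _).le
  refine (mul_le_mul_of_nonneg_left (by simpa only [mul_assoc] using hn) (exp_pos _).le).trans ?_
  simp

lemma integrableOn_Ioi_and_integral_le_of_Ico {g : ℝ → ℝ} {a : ℕ → ℝ}
    (hg0 : ∀ᵐ t ∂volume.restrict (Ici 0), 0 ≤ g t)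
    (hint : ∀ n : ℕ, IntegrableOn g (Ico n (n + 1)))
    (hle : ∀ n : ℕ, ∫ t in Ico (n:ℝ) (n + 1), g t ≤ a n) (ha : Summable a) :
    IntegrableOn g (Ioi 0) ∧ ∫ t in Ioi 0, g t ≤ ∑' n, a n := by
  have hcover : Ioi (0:ℝ) ⊆ ⋃ n : ℕ, Ico (n:ℝ) (n + 1) := fun t ht =>
    mem_iUnion.2 ⟨⌊t⌋₊, Nat.floor_le ht.le, Nat.lt_floor_add_one t⟩
  have hg0n : ∀ n : ℕ, 0 ≤ᵐ[volume.restrict (Ico (n:ℝ) (n + 1))] g := fun n =>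
    ae_restrict_of_ae_restrict_of_subset (fun t ht => (Nat.cast_nonneg n).trans ht.1) hg0
  have hg0' : 0 ≤ᵐ[volume.restrict (Ioi 0)] g :=
    ae_restrict_of_ae_restrict_of_subset Ioi_subset_Ici_self hg0
  have ha0 : ∀ n, 0 ≤ a n := fun n => (integral_nonneg_of_ae (hg0n n)).trans (hle n)
  have hlint : ∫⁻ t in Ioi 0, ENNReal.ofReal (g t) ≤ ENNReal.ofReal (∑' n, a n) :=
    calc ∫⁻ t in Ioi 0, ENNReal.ofReal (g t)
        ≤ ∑' n : ℕ, ∫⁻ t in Ico (n:ℝ) (n + 1), ENNReal.ofReal (g t) :=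
          (lintegral_mono_set hcover).trans (lintegral_iUnion_le _ _)
      _ = ∑' n : ℕ, ENNReal.ofReal (∫ t in Ico (n:ℝ) (n + 1), g t) := by
          simp_rw [ofReal_integral_eq_lintegral_ofReal (hint _) (hg0n _)]
      _ ≤ ∑' n, ENNReal.ofReal (a n) :=
          ENNReal.tsum_le_tsum fun n => ENNReal.ofReal_le_ofReal (hle n)
      _ = ENNReal.ofReal (∑' n, a n) := (ENNReal.ofReal_tsum_of_nonneg ha0 ha).symm
  have hmeas : AEStronglyMeasurable g (volume.restrict (Ioi 0)) :=
    (AEStronglyMeasurable.iUnion fun n => (hint n).1).mono_set hcover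
  refine ⟨⟨hmeas, (hasFiniteIntegral_iff_ofReal hg0').2 (hlint.trans_lt ENNReal.ofReal_lt_top)⟩, ?_⟩
  rw [integral_eq_lintegral_of_nonneg_ae hg0' hmeas]
  exact ENNReal.toReal_le_of_le_ofReal (tsum_nonneg ha0) hlint

lemma integral_Ico_exp_mul_le (hρ : 0 ≤ ρ) (hmono : MonotoneOn u (Ici 0))
    (hconc : ConcaveOn ℝ (Ici 0) u) (hu0 : 0 ≤ u 0) (hc : LocallyIntegrableOn c (Ici 0))
    (hc0 : ∀ᵐ t ∂volume.restrict (Ici 0), 0 ≤ c t)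
    (hcA : ∀ t ≥ 0, ∫ s in (0:ℝ)..t, c s ≤ A * exp (δ * t))
    (hg : AEStronglyMeasurable (fun t => exp (-ρ * t) * u (c t)) (volume.restrict (Ici 0)))
    (n : ℕ) :
    IntegrableOn (fun t => exp (-ρ * t) * u (c t)) (Ico n (n + 1)) ∧
      ∫ t in Ico (n:ℝ) (n + 1), exp (-ρ * t) * u (c t) ≤
        exp (-ρ * n) * u (exp (δ * (n + 1))) * (1 + A) := by
  -- `A * M` bounds the cumulative consumption up to time `n + 1`
  set M := exp (δ * (n + 1))
  set K := exp (-ρ * n) * u M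
  have hM : 0 < M := exp_pos _
  have hK : 0 ≤ K := mul_nonneg (exp_pos _).le (hu0.trans (hmono self_mem_Ici hM.le hM.le))
  have hsub : Ico (n:ℝ) (n + 1) ⊆ Icc 0 (n + 1) := fun t ht =>
    ⟨n.cast_nonneg.trans ht.1, ht.2.le⟩
  have hcI : IntegrableOn c (Icc 0 (n + 1)) :=
    hc.integrableOn_compact_subset Icc_subset_Ici_self isCompact_Icc
  have hbI : IntegrableOn (fun t => K + K / M * c t) (Ico n (n + 1)) :=
    (integrableOn_const (by simp)).add ((hcI.mono_set hsub).const_mul _)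
  have hpt : ∀ᵐ t ∂volume.restrict (Ico (n:ℝ) (n + 1)),
      ‖exp (-ρ * t) * u (c t)‖ ≤ K + K / M * c t := by
    filter_upwards [ae_restrict_of_ae_restrict_of_subset (hsub.trans Icc_subset_Ici_self) hc0,
      ae_restrict_mem measurableSet_Ico] with t ht htn
    have hut : 0 ≤ u (c t) := hu0.trans (hmono self_mem_Ici ht ht)
    rw [norm_of_nonneg (mul_nonneg (exp_pos _).le hut)]
    calc exp (-ρ * t) * u (c t) ≤ exp (-ρ * n) * (u M * (1 + c t / M)) :=
          mul_le_mul (exp_le_exp.2 (by nlinarith [htn.1]))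
            (le_mul_one_add_div_of_concaveOn hmono hconc hu0 hM ht) hut (exp_pos _).le
      _ = K + K / M * c t := by ring
  have hgI := hbI.mono' (hg.mono_set (hsub.trans Icc_subset_Ici_self)) hpt
  have hcM : ∫ t in Ico (n:ℝ) (n + 1), c t ≤ A * M :=
    calc ∫ t in Ico (n:ℝ) (n + 1), c t ≤ ∫ t in Icc (0:ℝ) (n + 1), c t :=
          setIntegral_mono_set hcI
            (ae_restrict_of_ae_restrict_of_subset Icc_subset_Ici_self hc0) hsub.eventuallyLE
      _ ≤ A * M := by
          rw [integral_Icc_eq_integral_Ioc, ← intervalIntegral.integral_of_le (by positivity)]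
          exact hcA _ (by positivity)
  refine ⟨hgI, ?_⟩
  calc ∫ t in Ico (n:ℝ) (n + 1), exp (-ρ * t) * u (c t)
      ≤ ∫ t in Ico (n:ℝ) (n + 1), (K + K / M * c t) :=
        integral_mono_ae hgI hbI (hpt.mono fun t ht => (le_abs_self _).trans ht)
    _ = K + K / M * ∫ t in Ico (n:ℝ) (n + 1), c t := by
        have hKI : IntegrableOn (fun _ => K) (Ico (n:ℝ) (n + 1)) := integrableOn_const (by simp)
        rw [integral_add hKI ((hcI.mono_set hsub).const_mul _), setIntegral_const,
          integral_const_mul (K / M)]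
        simp
    _ ≤ K + K / M * (A * M) := by gcongr
    _ = K * (1 + A) := by field_simp

theorem integrableOn_and_util_le_of_integral_le_exp {ε₀ : ℝ} (hρ : 0 ≤ ρ) (hε₀ : 0 < ε₀)
    (hu : ContinuousOn u (Ici 0)) (hmono : MonotoneOn u (Ici 0))
    (hconc : ConcaveOn ℝ (Ici 0) u) (hu0 : 0 ≤ u 0)
    (hexp : Tendsto (fun t => exp (ε₀ * t) * exp (-ρ * t) * u (exp (δ * t))) atTop (𝓝 0))
    (hc : LocallyIntegrableOn c (Ici 0)) (hc0 : ∀ᵐ t ∂volume.restrict (Ici 0), 0 ≤ c t)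
    (hcA : ∀ t ≥ 0, ∫ s in (0:ℝ)..t, c s ≤ A * exp (δ * t)) :
    IntegrableOn (fun t => exp (-ρ * t) * u (c t)) (Ioi 0) ∧
      Util ρ u c ≤ (∑' n : ℕ, exp (-ρ * n) * u (exp (δ * (n + 1)))) * (1 + A) := by
  have huc : AEStronglyMeasurable (fun t => u (c t)) (volume.restrict (Ici 0)) :=
    ((hu.comp_continuous (continuous_id.max continuous_const) fun x => le_max_right x 0)
      |>.comp_aestronglyMeasurable hc.aestronglyMeasurable).congr
      (by filter_upwards [hc0] with t ht; simp [max_eq_left ht])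
  have hg : AEStronglyMeasurable (fun t => exp (-ρ * t) * u (c t)) (volume.restrict (Ici 0)) :=
    (by fun_prop : Continuous fun t : ℝ => exp (-ρ * t)).aestronglyMeasurable.mul huc
  have hg0 : ∀ᵐ t ∂volume.restrict (Ici 0), 0 ≤ exp (-ρ * t) * u (c t) := by
    filter_upwards [hc0] with t ht
    exact mul_nonneg (exp_pos _).le (hu0.trans (hmono self_mem_Ici ht ht))
  have hblock := integral_Ico_exp_mul_le hρ hmono hconc hu0 hc hc0 hcA hg
  rw [← tsum_mul_right]
  exact integrableOn_Ioi_and_integral_le_of_Ico hg0 (fun n => (hblock n).1)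
    (fun n => (hblock n).2) ((summable_exp_mul_utility hε₀ hmono hu0 hexp).mul_right _)

lemma util_eq_integral_add_util_comp_add {τ : ℝ} (hτ : 0 ≤ τ)
    (hint : IntegrableOn (fun t => exp (-ρ * t) * u (c t)) (Ioi 0)) :
    Util ρ u c = (∫ t in (0:ℝ)..τ, exp (-ρ * t) * u (c t)) +
      exp (-ρ * τ) * Util ρ u (fun t => c (t + τ)) := by
  set g : ℝ → ℝ := fun t => exp (-ρ * t) * u (c t)
  have hshift : Util ρ u (fun t => c (t + τ)) = exp (ρ * τ) * ∫ t in Ioi τ, g t :=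
    calc Util ρ u (fun t => c (t + τ))
        = ∫ t in (· + τ) ⁻¹' Ioi τ, exp (ρ * τ) * g (t + τ) := by
          rw [preimage_add_const_Ioi, sub_self, Util]
          congr 1 with t
          simp only [g, ← mul_assoc, ← exp_add]
          ring_nf
      _ = exp (ρ * τ) * ∫ t in Ioi τ, g t := by
          rw [integral_const_mul, (measurePreserving_add_right volume τ).setIntegral_preimage_emb
            (measurableEmbedding_addRight τ)]
  rw [hshift, ← mul_assoc, ← exp_add, neg_mul, neg_add_cancel, exp_zero, one_mul,
    intervalIntegral.integral_of_le hτ, Util, ← setIntegral_union (Ioc_disjoint_Ioi le_rfl)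
      measurableSet_Ioi (hint.mono_set Ioc_subset_Ioi_self) (hint.mono_set (Ioi_subset_Ioi hτ)),
    Ioc_union_Ioi_eq_Ioi hτ]

end Utility

section Dynamics

variable {F : ℝ → ℝ} {k₀ τ : ℝ} {c k : ℝ → ℝ}

def concatAt (τ : ℝ) (f g : ℝ → ℝ) (t : ℝ) : ℝ := if t < τ then f t else g (t - τ)

lemma concatAt_of_lt {f g : ℝ → ℝ} {t : ℝ} (h : t < τ) : concatAt τ f g t = f t := if_pos h

lemma concatAt_of_le {f g : ℝ → ℝ} {t : ℝ} (h : τ ≤ t) : concatAt τ f g t = g (t - τ) :=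
  if_neg h.not_gt

lemma continuousOn_concatAt {f g : ℝ → ℝ} (hf : ContinuousOn f (Ici 0))
    (hg : ContinuousOn g (Ici 0)) (hfg : f τ = g 0) :
    ContinuousOn (concatAt τ f g) (Ici 0) := by
  refine ContinuousOn.if (fun t ht => ?_) (hf.mono inter_subset_left) ?_
  · rw [show {t : ℝ | t < τ} = Iio τ from rfl, frontier_Iio] at ht
    rw [ht.2, sub_self, hfg]
  · refine hg.comp (continuousOn_id.sub continuousOn_const) fun t ht => ?_
    have := ht.2
    simp only [not_lt] at this
    rw [show {a : ℝ | τ ≤ a} = Ici τ from rfl, closure_Ici] at this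
    exact sub_nonneg.2 (mem_Ici.1 this)

lemma locallyIntegrableOn_concatAt {f g : ℝ → ℝ} (hf : LocallyIntegrableOn f (Ici 0))
    (hg : LocallyIntegrableOn g (Ici 0)) (hτ : 0 ≤ τ) :
    LocallyIntegrableOn (concatAt τ f g) (Ici 0) := by
  refine locallyIntegrableOn_Ici_of_forall_integrableOn_Icc fun b => ?_
  have hbefore : IntegrableOn (concatAt τ f g) (Ico 0 τ) :=
    ((hf.integrableOn_compact_subset Icc_subset_Ici_self isCompact_Icc).mono_set
      Ico_subset_Icc_self).congr_fun (fun t ht => (concatAt_of_lt ht.2).symm) measurableSet_Ico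
  have hafter : IntegrableOn (concatAt τ f g) (Icc τ (b + τ)) := by
    have := integrableOn_comp_add_right
      (hg.integrableOn_compact_subset (t := Icc 0 b) Icc_subset_Ici_self isCompact_Icc) (-τ)
    rw [preimage_add_const_Icc, sub_neg_eq_add, zero_add, sub_neg_eq_add] at this
    exact this.congr_fun (fun t ht => by rw [concatAt_of_le ht.1, sub_eq_add_neg])
      measurableSet_Icc
  refine (hbefore.union hafter).mono_set fun t ht => ?_
  rcases lt_or_ge t τ with h | h
  · exact Or.inl ⟨ht.1, h⟩
  · exact Or.inr ⟨h, by linarith [ht.2]⟩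

lemma ae_nonneg_concatAt {f g : ℝ → ℝ} (hf : ∀ᵐ t ∂volume.restrict (Ici 0), 0 ≤ f t)
    (hg : ∀ᵐ t ∂volume.restrict (Ici 0), 0 ≤ g t) :
    ∀ᵐ t ∂volume.restrict (Ici 0), 0 ≤ concatAt τ f g t := by
  rw [ae_restrict_iff' measurableSet_Ici] at hf hg ⊢
  filter_upwards [hf, (measurePreserving_sub_right volume τ).quasiMeasurePreserving.ae hg]
    with t hft hgt ht
  rcases lt_or_ge t τ with h | h
  · rw [concatAt_of_lt h]; exact hft ht
  · rw [concatAt_of_le h]; exact hgt (sub_nonneg.2 h)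

lemma intervalIntegrable_comp_sub (hF : Continuous F) (hk : ContinuousOn k (Ici 0))
    (hc : LocallyIntegrableOn c (Ici 0)) {a b : ℝ} (ha : 0 ≤ a) (hb : 0 ≤ b) :
    IntervalIntegrable (fun s => F (k s) - c s) volume a b :=
  ((hF.comp_continuousOn hk).mono fun _ hx => (le_min ha hb).trans hx.1).intervalIntegrable.sub
    (intervalIntegrable_of_locallyIntegrableOn_Ici hc ha hb)

lemma SolOn.eq_add_integral (hF : Continuous F) (hsol : SolOn F k₀ c k)
    (hc : LocallyIntegrableOn c (Ici 0)) {a b : ℝ} (ha : 0 ≤ a) (hb : 0 ≤ b) :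
    k b = k a + ∫ s in a..b, (F (k s) - c s) := by
  rw [hsol.2.2 b hb, hsol.2.2 a ha, add_assoc, intervalIntegral.integral_add_adjacent_intervals
    (intervalIntegrable_comp_sub hF hsol.1 hc le_rfl ha)
    (intervalIntegrable_comp_sub hF hsol.1 hc ha hb)]

lemma SolOn.comp_add (hF : Continuous F) (hsol : SolOn F k₀ c k)
    (hc : LocallyIntegrableOn c (Ici 0)) (hτ : 0 ≤ τ) :
    SolOn F (k τ) (fun t => c (t + τ)) (fun t => k (t + τ)) := by
  refine ⟨hsol.1.comp (continuousOn_id.add continuousOn_const) fun t ht => ?_, by simp,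
    fun t ht => ?_⟩
  · exact add_nonneg ht hτ
  · show k (t + τ) = k τ + ∫ s in (0:ℝ)..t, (F (k (s + τ)) - c (s + τ))
    rw [hsol.eq_add_integral hF hc hτ (add_nonneg ht hτ),
      intervalIntegral.integral_comp_add_right (fun s => F (k s) - c s), zero_add]

lemma SolOn.concatAt (hF : Continuous F) {c' k' : ℝ → ℝ} (hsol : SolOn F k₀ c k)
    (hsol' : SolOn F (k τ) c' k') (hc : LocallyIntegrableOn c (Ici 0))
    (hc' : LocallyIntegrableOn c' (Ici 0)) (hτ : 0 ≤ τ) :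
    SolOn F k₀ (concatAt τ c c') (concatAt τ k k') := by
  have hK := continuousOn_concatAt hsol.1 hsol'.1 hsol'.2.1.symm
  have hC := locallyIntegrableOn_concatAt hc hc' hτ
  have hbefore : ∀ t ∈ Icc 0 τ,
      ∫ s in (0:ℝ)..t, (F (_root_.concatAt τ k k' s) - _root_.concatAt τ c c' s) =
        ∫ s in (0:ℝ)..t, (F (k s) - c s) := fun t ht =>
    intervalIntegral.integral_congr_Ioo_of_le ht.1 fun s hs => by
      simp only [concatAt_of_lt (hs.2.trans_le ht.2)]
  refine ⟨hK, ?_, fun t ht => ?_⟩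
  · rcases hτ.lt_or_eq with hτ | rfl
    · rw [concatAt_of_lt hτ, hsol.2.1]
    · rw [concatAt_of_le le_rfl, sub_self, hsol'.2.1, hsol.2.1]
  rcases lt_or_ge t τ with htτ | htτ
  · rw [concatAt_of_lt htτ, hbefore t ⟨ht, htτ.le⟩, hsol.2.2 t ht]
  have hafter : ∫ s in τ..t, (F (_root_.concatAt τ k k' s) - _root_.concatAt τ c c' s) =
      ∫ s in (0:ℝ)..(t - τ), (F (k' s) - c' s) := by
    rw [← sub_self τ, ← intervalIntegral.integral_comp_sub_right (fun s => F (k' s) - c' s)]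
    exact intervalIntegral.integral_congr fun s hs => by
      simp only [concatAt_of_le (uIcc_of_le htτ ▸ hs).1]
  rw [concatAt_of_le htτ, hsol'.2.2 (t - τ) (sub_nonneg.2 htτ), ← hafter, hsol.2.2 τ hτ,
    ← hbefore τ ⟨hτ, le_rfl⟩, add_assoc, intervalIntegral.integral_add_adjacent_intervals
      (intervalIntegrable_comp_sub hF hK hC le_rfl hτ)
      (intervalIntegrable_comp_sub hF hK hC hτ ht)]

structure IsAdmissible (F : ℝ → ℝ) (k₀ : ℝ) (c k : ℝ → ℝ) : Prop where
  locallyIntegrableOn : LocallyIntegrableOn c (Ici 0)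
  ae_nonneg : ∀ᵐ t ∂volume.restrict (Ici 0), 0 ≤ c t
  solOn : SolOn F k₀ c k
  nonneg : ∀ t ≥ (0:ℝ), 0 ≤ k t

lemma adm_iff_exists_isAdmissible : Adm F k₀ c ↔ ∃ k, IsAdmissible F k₀ c k :=
  ⟨fun ⟨h₁, h₂, k, h₃, h₄⟩ => ⟨k, h₁, h₂, h₃, h₄⟩, fun ⟨k, h₁, h₂, h₃, h₄⟩ => ⟨h₁, h₂, k, h₃, h₄⟩⟩

lemma isAdmissible_iff : IsAdmissible F k₀ c k ↔ LocallyIntegrableOn c (Ici 0) ∧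
    (∀ᵐ t ∂volume.restrict (Ici 0), 0 ≤ c t) ∧ SolOn F k₀ c k ∧ ∀ t ≥ (0:ℝ), 0 ≤ k t :=
  ⟨fun ⟨h₁, h₂, h₃, h₄⟩ => ⟨h₁, h₂, h₃, h₄⟩, fun ⟨h₁, h₂, h₃, h₄⟩ => ⟨h₁, h₂, h₃, h₄⟩⟩

lemma IsAdmissible.initial_nonneg (h : IsAdmissible F k₀ c k) : 0 ≤ k₀ :=
  h.solOn.2.1 ▸ h.nonneg 0 le_rfl

lemma adm_const (hk₀ : 0 ≤ k₀) (hF : 0 ≤ F k₀) : Adm F k₀ fun _ => F k₀ :=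
  ⟨(locallyIntegrable_const _).locallyIntegrableOn _, ae_of_all _ fun _ => hF, fun _ => k₀,
    ⟨continuousOn_const, rfl, fun _ _ => by simp⟩, fun _ _ => hk₀⟩

lemma IsAdmissible.comp_add (hF : Continuous F) (h : IsAdmissible F k₀ c k) (hτ : 0 ≤ τ) :
    IsAdmissible F (k τ) (fun t => c (t + τ)) (fun t => k (t + τ)) where
  locallyIntegrableOn := locallyIntegrableOn_Ici_of_forall_integrableOn_Icc fun b => by
    have := integrableOn_comp_add_right (h.locallyIntegrableOn.integrableOn_compact_subset
      (t := Icc τ (b + τ)) (fun t ht => hτ.trans ht.1) isCompact_Icc) τ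
    rwa [preimage_add_const_Icc, sub_self, add_sub_cancel_right] at this
  ae_nonneg := by
    have := h.ae_nonneg
    rw [ae_restrict_iff' measurableSet_Ici] at this ⊢
    filter_upwards [(measurePreserving_add_right volume τ).quasiMeasurePreserving.ae this]
      with t ht ht0
    exact ht (add_nonneg ht0 hτ)
  solOn := h.solOn.comp_add hF h.locallyIntegrableOn hτ
  nonneg t ht := h.nonneg _ (add_nonneg ht hτ)

lemma IsAdmissible.concatAt (hF : Continuous F) {c' k' : ℝ → ℝ} (h : IsAdmissible F k₀ c k)
    (h' : IsAdmissible F (k τ) c' k') (hτ : 0 ≤ τ) :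
    IsAdmissible F k₀ (concatAt τ c c') (concatAt τ k k') := by
  refine ⟨locallyIntegrableOn_concatAt h.locallyIntegrableOn h'.locallyIntegrableOn hτ,
    ae_nonneg_concatAt h.ae_nonneg h'.ae_nonneg,
    h.solOn.concatAt hF h'.solOn h.locallyIntegrableOn h'.locallyIntegrableOn hτ, fun t ht => ?_⟩
  rcases lt_or_ge t τ with htτ | htτ
  · rw [concatAt_of_lt htτ]; exact h.nonneg t ht
  · rw [concatAt_of_le htτ]; exact h'.nonneg _ (sub_nonneg.2 htτ)

lemma IsAdmissible.add_integral_le {δ Mh : ℝ} (hF : Continuous F)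
    (hFle : ∀ x ≥ (0:ℝ), F x ≤ δ * x + Mh) (h : IsAdmissible F k₀ c k) {t : ℝ} (ht : 0 ≤ t) :
    k t + ∫ s in (0:ℝ)..t, c s ≤ k₀ + Mh * t + δ * ∫ s in (0:ℝ)..t, k s := by
  have hkI : IntervalIntegrable k volume 0 t :=
    (h.solOn.1.mono fun _ hx => (le_min le_rfl ht).trans hx.1).intervalIntegrable
  have hFk : IntervalIntegrable (fun s => F (k s)) volume 0 t :=
    ((hF.comp_continuousOn h.solOn.1).mono fun _ hx => (le_min le_rfl ht).trans hx.1)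
      |>.intervalIntegrable
  have hF_le : ∫ s in (0:ℝ)..t, F (k s) ≤ ∫ s in (0:ℝ)..t, (δ * k s + Mh) :=
    intervalIntegral.integral_mono_on ht hFk ((hkI.const_mul δ).add intervalIntegrable_const)
      fun s hs => hFle _ (h.nonneg s hs.1)
  rw [intervalIntegral.integral_add (hkI.const_mul δ) intervalIntegrable_const,
    intervalIntegral.integral_const_mul, intervalIntegral.integral_const, smul_eq_mul,
    sub_zero] at hF_le
  rw [h.solOn.2.2 t ht, intervalIntegral.integral_sub hFk
    (intervalIntegrable_of_locallyIntegrableOn_Ici h.locallyIntegrableOn le_rfl ht)]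
  linarith

lemma IsAdmissible.integral_le_exp {δ Mh : ℝ} (hF : Continuous F)
    (hFle : ∀ x ≥ (0:ℝ), F x ≤ δ * x + Mh) (hδ : 0 < δ) (hMh : 0 ≤ Mh)
    (h : IsAdmissible F k₀ c k) {t : ℝ} (ht : 0 ≤ t) :
    ∫ s in (0:ℝ)..t, c s ≤ (k₀ + Mh / δ) * exp (δ * t) := by
  -- extend `k` continuously to the left of `0` to apply Grönwall's inequality
  set kt : ℝ → ℝ := fun s => k (max s 0)
  have hkt_eq : ∀ s ≥ 0, ∫ r in (0:ℝ)..s, kt r = ∫ r in (0:ℝ)..s, k r := fun s hs =>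
    intervalIntegral.integral_congr fun r hr => by
      simp only [kt, max_eq_left (uIcc_of_le hs ▸ hr).1]
  have hgron := le_exp_of_le_add_integral (k := kt) (k₀ := k₀)
    (h.solOn.1.comp_continuous (continuous_id.max continuous_const) fun s => le_max_right s 0)
    hδ hMh (fun s hs => by
      rw [hkt_eq s hs]
      simp only [kt, max_eq_left hs]
      linarith [h.add_integral_le hF hFle hs, intervalIntegral.integral_nonneg_of_ae_restrict hs
        (ae_restrict_of_ae_restrict_of_subset Icc_subset_Ici_self h.ae_nonneg)]) ht
  rw [hkt_eq t ht] at hgron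
  linarith [h.add_integral_le hF hFle ht, h.nonneg t ht]

end Dynamics

section Bellman

variable {F u : ℝ → ℝ} {ρ k₀ τ : ℝ} {c k : ℝ → ℝ}

def HasBoundedUtility (F : ℝ → ℝ) (ρ : ℝ) (u : ℝ → ℝ) : Prop :=
  ∀ k₀ ≥ (0:ℝ), ∃ B, ∀ c k, IsAdmissible F k₀ c k →
    IntegrableOn (fun t => exp (-ρ * t) * u (c t)) (Ioi 0) ∧ Util ρ u c ≤ B

lemma HasBoundedUtility.util_le_val (hU : HasBoundedUtility F ρ u)
    (h : IsAdmissible F k₀ c k) : Util ρ u c ≤ Val F ρ u k₀ := by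
  obtain ⟨B, hB⟩ := hU k₀ h.initial_nonneg
  refine le_csSup ⟨B, ?_⟩ ⟨c, adm_iff_exists_isAdmissible.2 ⟨k, h⟩, rfl⟩
  rintro _ ⟨c', hc', rfl⟩
  obtain ⟨k', h'⟩ := adm_iff_exists_isAdmissible.1 hc'
  exact (hB c' k' h').2

lemma HasBoundedUtility.integral_add_util_le_val (hF : Continuous F)
    (hU : HasBoundedUtility F ρ u) {c' k' : ℝ → ℝ} (h : IsAdmissible F k₀ c k)
    (h' : IsAdmissible F (k τ) c' k') (hτ : 0 ≤ τ) :
    (∫ t in (0:ℝ)..τ, exp (-ρ * t) * u (c t)) + exp (-ρ * τ) * Util ρ u c' ≤ Val F ρ u k₀ := by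
  have hcat := h.concatAt hF h' hτ
  obtain ⟨B, hB⟩ := hU k₀ h.initial_nonneg
  have hbefore : ∫ t in (0:ℝ)..τ, exp (-ρ * t) * u (concatAt τ c c' t) =
      ∫ t in (0:ℝ)..τ, exp (-ρ * t) * u (c t) :=
    intervalIntegral.integral_congr_Ioo_of_le hτ fun t ht => by rw [concatAt_of_lt ht.2]
  have hafter : Util ρ u (fun t => concatAt τ c c' (t + τ)) = Util ρ u c' :=
    setIntegral_congr_fun measurableSet_Ioi fun t ht => by
      simp only [concatAt_of_le (le_add_of_nonneg_left (le_of_lt ht)), add_sub_cancel_right]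
  calc (∫ t in (0:ℝ)..τ, exp (-ρ * t) * u (c t)) + exp (-ρ * τ) * Util ρ u c'
      = Util ρ u (concatAt τ c c') := by
        rw [util_eq_integral_add_util_comp_add hτ (hB _ _ hcat).1, hbefore, hafter]
    _ ≤ Val F ρ u k₀ := hU.util_le_val hcat

lemma HasBoundedUtility.integral_add_val_le_val (hF : Continuous F)
    (hU : HasBoundedUtility F ρ u) (hne : ∀ k₀ ≥ (0:ℝ), ∃ c, Adm F k₀ c)
    (h : IsAdmissible F k₀ c k) (hτ : 0 ≤ τ) :
    (∫ t in (0:ℝ)..τ, exp (-ρ * t) * u (c t)) + exp (-ρ * τ) * Val F ρ u (k τ) ≤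
      Val F ρ u k₀ := by
  obtain ⟨c₁, hc₁⟩ := hne (k τ) (h.nonneg τ hτ)
  have hval : Val F ρ u (k τ) ≤
      (Val F ρ u k₀ - ∫ t in (0:ℝ)..τ, exp (-ρ * t) * u (c t)) / exp (-ρ * τ) := by
    refine csSup_le ⟨_, c₁, hc₁, rfl⟩ ?_
    rintro _ ⟨c', hc', rfl⟩
    obtain ⟨k', h'⟩ := adm_iff_exists_isAdmissible.1 hc'
    rw [le_div_iff₀ (exp_pos _)]
    linarith [hU.integral_add_util_le_val hF h h' hτ]
  rw [le_div_iff₀ (exp_pos _)] at hval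
  linarith

theorem HasBoundedUtility.val_eq_sSup (hF : Continuous F) (hU : HasBoundedUtility F ρ u)
    (hne : ∀ k₀ ≥ (0:ℝ), ∃ c, Adm F k₀ c) (hτ : 0 ≤ τ) (hk₀ : 0 ≤ k₀) :
    Val F ρ u k₀ = sSup {x | ∃ c k, IsAdmissible F k₀ c k ∧
      x = (∫ t in (0:ℝ)..τ, exp (-ρ * t) * u (c t)) + exp (-ρ * τ) * Val F ρ u (k τ)} := by
  set S := {x | ∃ c k, IsAdmissible F k₀ c k ∧
    x = (∫ t in (0:ℝ)..τ, exp (-ρ * t) * u (c t)) + exp (-ρ * τ) * Val F ρ u (k τ)}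
  have hbdd : BddAbove S := ⟨Val F ρ u k₀, by
    rintro _ ⟨c, k, h, rfl⟩
    exact hU.integral_add_val_le_val hF hne h hτ⟩
  obtain ⟨c₀, hc₀⟩ := hne k₀ hk₀
  obtain ⟨k₀', h₀⟩ := adm_iff_exists_isAdmissible.1 hc₀
  refine le_antisymm (csSup_le ⟨_, c₀, hc₀, rfl⟩ ?_) (csSup_le ⟨_, c₀, k₀', h₀, rfl⟩ ?_)
  · rintro _ ⟨c, hc, rfl⟩
    obtain ⟨k, h⟩ := adm_iff_exists_isAdmissible.1 hc
    obtain ⟨B, hB⟩ := hU k₀ hk₀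
    refine le_csSup_of_le hbdd ⟨c, k, h, rfl⟩ ?_
    rw [util_eq_integral_add_util_comp_add hτ (hB c k h).1]
    gcongr
    exact hU.util_le_val (h.comp_add hF hτ)
  · rintro _ ⟨c, k, h, rfl⟩
    exact hU.integral_add_val_le_val hF hne h hτ

end Bellman

theorem stmt19 (F u : ℝ → ℝ) (ρ L ε₀ Mh : ℝ)
    (hρ : 0 < ρ) (hL : 0 < L) (hε₀ : 0 < ε₀) (hMh : 0 < Mh)
    (hF : ContDiff ℝ 1 F) (hFmono : StrictMono F) (hF0 : F 0 = 0)
    (hFsub : ∀ x ≥ (0:ℝ), F x ≤ (L + ε₀) * x + Mh)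
    (hucont : ContinuousOn u (Set.Ici 0)) (humono : StrictMonoOn u (Set.Ici 0))
    (huconc : ConcaveOn ℝ (Set.Ici 0) u) (hu0 : u 0 = 0)
    (hexp : Filter.Tendsto
      (fun t => Real.exp (ε₀ * t) * Real.exp (-ρ * t) * u (Real.exp ((L + ε₀) * t)))
      Filter.atTop (nhds 0)) :
    ∀ τ > (0:ℝ), ∀ k₀ ≥ (0:ℝ),
      Val F ρ u k₀ = sSup {x | ∃ c k : ℝ → ℝ,
        LocallyIntegrableOn c (Set.Ici 0) ∧
        (∀ᵐ t ∂(volume.restrict (Set.Ici 0)), 0 ≤ c t) ∧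
        SolOn F k₀ c k ∧ (∀ t ≥ (0:ℝ), 0 ≤ k t) ∧
        x = (∫ t in (0:ℝ)..τ, Real.exp (-ρ * t) * u (c t)) +
              Real.exp (-ρ * τ) * Val F ρ u (k τ)} := by
  intro τ hτ k₀ hk₀
  have hU : HasBoundedUtility F ρ u := fun k₀ _ => ⟨_, fun c k h =>
    integrableOn_and_util_le_of_integral_le_exp hρ.le hε₀ hucont humono.monotoneOn huconc hu0.ge
      hexp h.locallyIntegrableOn h.ae_nonneg fun t ht =>
        h.integral_le_exp hF.continuous hFsub (by linarith) hMh.le ht⟩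
  have hne : ∀ k ≥ (0:ℝ), ∃ c, Adm F k c := fun k hk =>
    ⟨_, adm_const hk (hF0 ▸ hFmono.monotone hk)⟩
  simpa only [isAdmissible_iff, and_assoc] using hU.val_eq_sSup hF.continuous hne hτ.le hk₀
end
end
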